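/- arXiv:1002.2866 — 5 statements merged into one kernel-verified Lean document; each statement's English description precedes it below -/
import Mathlib

section
/- Let F : ℝ² → ℝ² be a lift of a homeomorphism f of the two-torus homotopic to the identity. Suppose f is non-wandering and ρ(F) has non-empty interior. Then no point of the chaotic region C(f) is (1/2)-Lyapunov stable; that is, for every z ∈ C(f) and every δ > 0 there exist n ∈ ℕ and a point w ∈ B_δ(z) with d(f^n(w), f^n(z)) > 1/2. -/
noncomputable section
open Filter Topology Metric Set MeasureTheory

/-- Euclidean space `ℝ^d`. -/
abbrev E (d : ℕ) := EuclideanSpace ℝ (Fin d)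

/-- The integer lattice `ℤ^d` as an additive subgroup of `ℝ^d`. -/
def ZLat (d : ℕ) : AddSubgroup (E d) where
  carrier := {z | ∀ i, ∃ m : ℤ, z i = (m : ℝ)}
  zero_mem' := fun i => ⟨0, by simp⟩
  add_mem' := by
    intro x y hx hy i
    obtain ⟨m, hm⟩ := hx i
    obtain ⟨n, hn⟩ := hy i
    exact ⟨m + n, by simp [PiLp.add_apply, hm, hn]⟩
  neg_mem' := by
    intro x hx i
    obtain ⟨m, hm⟩ := hx i
    exact ⟨-m, by simp [PiLp.neg_apply, hm]⟩

/-- The torus `T^d = ℝ^d / ℤ^d`. -/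
abbrev T (d : ℕ) := E d ⧸ ZLat d

/-- The canonical projection `π : ℝ^d → T^d`. -/
def tpi (d : ℕ) : E d → T d := QuotientAddGroup.mk

/-- The set of rotation vectors of orbit segments starting in `W ⊆ ℝ^d`:
`{ρ | ∃ nᵢ → ∞, zᵢ ∈ W, (F^{nᵢ}(zᵢ) - zᵢ)/nᵢ → ρ}`. -/
def rotRel {d : ℕ} (F : E d → E d) (W : Set (E d)) : Set (E d) :=
  {ρ | ∃ (n : ℕ → ℕ) (z : ℕ → E d),
    Tendsto n atTop atTop ∧ (∀ i, z i ∈ W) ∧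
    Tendsto (fun i => (n i : ℝ)⁻¹ • (F^[n i] (z i) - z i)) atTop (𝓝 ρ)}

/-- The Misiurewicz–Ziemian rotation set `ρ(F)` of a lift `F`. -/
def rotSet {d : ℕ} (F : E d → E d) : Set (E d) := rotRel F Set.univ

/-- The rotation subset `ρ_U(F)` for `U ⊆ T^d` (starting points in `π⁻¹(U)`). -/
def rotU {d : ℕ} (F : E d → E d) (U : Set (T d)) : Set (E d) :=
  rotRel F (tpi d ⁻¹' U)

/-- `F` is a lift of the torus homeomorphism `f` (which is then homotopic to the
identity, as expressed by commutation with the deck translations). -/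
def IsLift {d : ℕ} (F : E d ≃ₜ E d) (f : T d ≃ₜ T d) : Prop :=
  (∀ z : E d, tpi d (F z) = f (tpi d z)) ∧ ∀ z : E d, ∀ m ∈ ZLat d, F (z + m) = F z + m

/-- `U ⊆ T^d` is bounded: the connected components of `π⁻¹(U)` are bounded. -/
def BoundedSet {d : ℕ} (U : Set (T d)) : Prop :=
  ∀ z ∈ tpi d ⁻¹' U, Bornology.IsBounded (connectedComponentIn (tpi d ⁻¹' U) z)

/-- `U ⊆ T^d` is recurrent: `f^n(U) ∩ U ≠ ∅` for infinitely many `n ≥ 1`. -/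
def Recurrent {d : ℕ} (f : T d ≃ₜ T d) (U : Set (T d)) : Prop :=
  {n : ℕ | 1 ≤ n ∧ ((⇑f)^[n] '' U ∩ U).Nonempty}.Infinite

/-- The Euclidean scalar product `⟨z, v⟩` in `ℝ²`. -/
def sdot (v z : E 2) : ℝ := z 0 * v 0 + z 1 * v 1

/-- `⟨z, v^⊥⟩` where `v^⊥ = (-v₂, v₁)`. -/
def pdot (v z : E 2) : ℝ := z 1 * v 0 - z 0 * v 1

/-- The affine line `L_{λ,v} = λv + {v}^⊥ = {z | ⟨z,v⟩ = λ⟨v,v⟩}`. -/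
def lineL (lam : ℝ) (v : E 2) : Set (E 2) := {z | sdot v z = lam * sdot v v}

/-- A vector of `ℝ²` is rational if both coordinates are rational. -/
def RatVec (z : E 2) : Prop := (∃ q : ℚ, z 0 = (q : ℝ)) ∧ ∃ q : ℚ, z 1 = (q : ℝ)

instance ZLat_closed (d : ℕ) : IsClosed ((ZLat d : AddSubgroup (E d)) : Set (E d)) := by
  have h : ((ZLat d : AddSubgroup (E d)) : Set (E d)) =
      ⋂ i, (fun z : E d => z i) ⁻¹' (Set.range ((↑) : ℤ → ℝ)) := by
    ext z
    simp only [Set.mem_iInter, Set.mem_preimage, Set.mem_range]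
    constructor
    · intro hz i; obtain ⟨m, hm⟩ := hz i; exact ⟨m, hm.symm⟩
    · intro hz i; obtain ⟨m, hm⟩ := hz i; exact ⟨m, hm.symm⟩
  rw [h]
  exact isClosed_iInter fun i =>
    Int.isClosedEmbedding_coe_real.isClosed_range.preimage (EuclideanSpace.proj i).continuous


/-!
Suppose `z = π(ẑ)` were ½-Lyapunov stable with radius `δ`. Every lifted iterate `F^n(B_δ(ẑ))` is a
connected open set projecting into the closed ½-ball around `f^n(z)`. The closed ½-balls around the
lattice translates of a point touch only at isolated tangency points, which an open set cannot
contain, so `F^n(B_δ(ẑ))` stays in the ½-ball around `F^n(ẑ)`: lifted orbits starting in the ball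
shadow the orbit of `ẑ`. As `f` is non-wandering, the ball returns to itself at arbitrarily large
times `n`, and each return gives a vector `m` with `‖F^{k+n}(ẑ) - F^k(ẑ) - m‖ ≤ 1` for all `k`;
hence every vector of `ρ_{B_δ(z)}(F)` lies within `1/n` of `m/n`. So this rotation subset is at most
a point, and its convex hull has empty interior, contradicting `z ∈ C(f)`.
-/

theorem IsOpenMap.iterate {X : Type*} [TopologicalSpace X] {g : X → X} (hg : IsOpenMap g) :
    ∀ n : ℕ, IsOpenMap g^[n]
  | 0 => IsOpenMap.id
  | n + 1 => (hg.iterate n).comp hg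

theorem exists_lt_iterate_mem_of_nonwandering {X : Type*} [TopologicalSpace X] {g : X → X}
    (hg : Continuous g)
    (hnw : ∀ V : Set X, IsOpen V → V.Nonempty → ∃ n : ℕ, 1 ≤ n ∧ (g^[n] '' V ∩ V).Nonempty)
    (M : ℕ) {V : Set X} (hV : IsOpen V) (hVne : V.Nonempty) :
    ∃ n, M < n ∧ ∃ x ∈ V, g^[n] x ∈ V := by
  induction M generalizing V with
  | zero =>
    obtain ⟨n, hn, _, ⟨x, hx, rfl⟩, hnx⟩ := hnw V hV hVne
    exact ⟨n, hn, x, hx, hnx⟩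
  | succ M ih =>
    obtain ⟨n, hn, _, ⟨x, hx, rfl⟩, hnx⟩ := hnw V hV hVne
    -- a return of `V ∩ g^[-n] V` at a time `k` is a return of `V` at time `n + k`
    obtain ⟨k, hMk, y, ⟨hy, -⟩, -, hky⟩ :=
      ih (hV.inter (hV.preimage (hg.iterate n))) ⟨x, hx, hnx⟩
    exact ⟨n + k, by omega, y, hy, by rwa [Function.iterate_add_apply]⟩

theorem Set.nontrivial_of_interior_convexHull_nonempty {V : Type*} [NormedAddCommGroup V]
    [NormedSpace ℝ V] [Nontrivial V] {s : Set V} (h : (interior (convexHull ℝ s)).Nonempty) :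
    s.Nontrivial := by
  by_contra hs
  rcases (Set.not_nontrivial_iff.1 hs).eq_empty_or_singleton with rfl | ⟨x, rfl⟩
  · simp at h
  · simp [interior_singleton] at h

theorem norm_sub_sub_nsmul_le {V : Type*} [SeminormedAddCommGroup V] {u : ℕ → V} {n : ℕ}
    {m : V} {b : ℝ} (h : ∀ k, ‖u (k + n) - u k - m‖ ≤ b) (q r : ℕ) :
    ‖u (q * n + r) - u r - q • m‖ ≤ q * b := by
  induction q with
  | zero => simp
  | succ q ih =>
    calc ‖u ((q + 1) * n + r) - u r - (q + 1) • m‖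
        = ‖(u (q * n + r + n) - u (q * n + r) - m) + (u (q * n + r) - u r - q • m)‖ := by
          rw [add_mul, one_mul, add_right_comm, succ_nsmul]; congr 1; abel
      _ ≤ b + q * b := (norm_add_le _ _).trans (add_le_add (h _) ih)
      _ = (q + 1 : ℕ) * b := by push_cast; ring

theorem exists_norm_sub_sub_smul_le {V : Type*} [SeminormedAddCommGroup V] [NormedSpace ℝ V]
    {u : ℕ → V} {n : ℕ} (hn : 0 < n) {m : V} {b : ℝ} (h : ∀ k, ‖u (k + n) - u k - m‖ ≤ b) :
    ∃ C, ∀ N : ℕ, ‖u N - u 0 - (N : ℝ) • (n : ℝ)⁻¹ • m‖ ≤ C + N * (b / n) := by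
  refine ⟨∑ r ∈ Finset.range n, ‖u r - u 0‖ + ‖m‖, fun N => ?_⟩
  obtain ⟨q, r, hr, rfl⟩ : ∃ q r, r < n ∧ q * n + r = N :=
    ⟨N / n, N % n, Nat.mod_lt _ hn, Nat.div_add_mod' N n⟩
  have hb : 0 ≤ b := (norm_nonneg _).trans (h 0)
  have hn' : (0 : ℝ) < n := Nat.cast_pos.2 hn
  have hrn : (r : ℝ) / n ≤ 1 := (div_le_one hn').2 (by exact_mod_cast hr.le)
  have hcoef : ((q * n + r : ℕ) : ℝ) * (n : ℝ)⁻¹ = q + r / n := by push_cast; field_simp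
  have hsplit : u (q * n + r) - u 0 - ((q * n + r : ℕ) : ℝ) • (n : ℝ)⁻¹ • m
      = (u (q * n + r) - u r - q • m) + (u r - u 0) - ((r : ℝ) / n) • m := by
    rw [smul_smul, hcoef, add_smul, Nat.cast_smul_eq_nsmul]; abel
  rw [hsplit]
  calc _ ≤ ‖u (q * n + r) - u r - q • m‖ + ‖u r - u 0‖ + ‖((r : ℝ) / n) • m‖ :=
        norm_sub_le_of_le (norm_add_le _ _) le_rfl
    _ ≤ q * b + ∑ r ∈ Finset.range n, ‖u r - u 0‖ + 1 * ‖m‖ := by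
        gcongr
        · exact norm_sub_sub_nsmul_le h q r
        · exact Finset.single_le_sum (f := fun r => ‖u r - u 0‖) (fun _ _ => norm_nonneg _)
            (Finset.mem_range.2 hr)
        · rw [norm_smul, Real.norm_of_nonneg (by positivity)]
          gcongr
    _ ≤ (∑ r ∈ Finset.range n, ‖u r - u 0‖ + ‖m‖) + ((q * n + r : ℕ) : ℝ) * (b / n) := by
        have : (q : ℝ) * b ≤ ((q * n + r : ℕ) : ℝ) * (b / n) := by
          rw [mul_div_assoc', le_div_iff₀ hn']; push_cast; nlinarith
        linarith

theorem norm_sub_le_of_mem_rotRel {d : ℕ} {F : E d → E d} {W : Set (E d)} {p ρ : E d} {b C : ℝ}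
    (hW : ∀ w ∈ W, ∀ N : ℕ, ‖F^[N] w - w - (N : ℝ) • p‖ ≤ C + N * b) (hρ : ρ ∈ rotRel F W) :
    ‖ρ - p‖ ≤ b := by
  obtain ⟨n, z, hn, hzW, hlim⟩ := hρ
  have hbound : ∀ᶠ i in atTop, ‖(n i : ℝ)⁻¹ • (F^[n i] (z i) - z i) - p‖ ≤ C / n i + b := by
    filter_upwards [hn.eventually_gt_atTop 0] with i hi
    have hi' : (0 : ℝ) < n i := Nat.cast_pos.2 hi
    calc ‖(n i : ℝ)⁻¹ • (F^[n i] (z i) - z i) - p‖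
        = (n i : ℝ)⁻¹ * ‖F^[n i] (z i) - z i - (n i : ℝ) • p‖ := by
          rw [← norm_smul_of_nonneg (inv_nonneg.2 hi'.le), smul_sub _ (F^[n i] (z i) - z i),
            smul_smul, inv_mul_cancel₀ hi'.ne', one_smul]
      _ ≤ (n i : ℝ)⁻¹ * (C + n i * b) := by gcongr; exact hW _ (hzW i) _
      _ = C / n i + b := by field_simp
  have hC : Tendsto (fun i => C / n i + b) atTop (𝓝 b) := by
    simpa using (tendsto_const_nhds.div_atTop (tendsto_natCast_atTop_atTop.comp hn)).add_const b
  exact le_of_tendsto_of_tendsto (hlim.sub_const p).norm hC hbound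

section Torus

variable {d : ℕ}

theorem dist_tpi_le (a b : E d) : dist (tpi d a) (tpi d b) ≤ dist a b := by
  rw [dist_eq_norm, dist_eq_norm]
  unfold tpi
  rw [← QuotientAddGroup.mk_sub]
  exact QuotientAddGroup.norm_mk_le_norm

theorem tpi_eq_tpi_iff {a b : E d} : tpi d a = tpi d b ↔ a - b ∈ ZLat d :=
  QuotientAddGroup.eq_iff_sub_mem

theorem exists_mem_ball_tpi_eq {x : T d} {c : E d} {δ : ℝ} (h : dist x (tpi d c) < δ) :
    ∃ w ∈ ball c δ, tpi d w = x := by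
  rw [dist_eq_norm] at h
  obtain ⟨a, ha, hna⟩ := QuotientAddGroup.norm_lt_iff.1 h
  refine ⟨c + a, by rwa [mem_ball_iff_norm, add_sub_cancel_left], ?_⟩
  unfold tpi
  rw [QuotientAddGroup.mk_add, ha]
  exact add_sub_cancel _ _

theorem exists_mem_ZLat_norm_sub_le {a c : E d} {r : ℝ} (h : dist (tpi d a) (tpi d c) ≤ r) :
    ∃ m ∈ ZLat d, ‖a - c - m‖ ≤ r := by
  unfold tpi at h
  rw [dist_eq_norm, ← QuotientAddGroup.mk_sub, QuotientAddGroup.norm_mk] at h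
  obtain ⟨m, hm, hdist⟩ := (ZLat_closed d).exists_infDist_eq_dist ⟨0, (ZLat d).zero_mem⟩ (a - c)
  exact ⟨m, hm, by rwa [← dist_eq_norm, ← hdist]⟩

theorem one_le_norm_of_mem_ZLat {m : E d} (hm : m ∈ ZLat d) (hm0 : m ≠ 0) : 1 ≤ ‖m‖ := by
  obtain ⟨i, hi⟩ : ∃ i, m i ≠ 0 := by
    by_contra! h
    exact hm0 (by ext i; simpa using h i)
  obtain ⟨k, hk⟩ := hm i
  rw [hk, Int.cast_ne_zero] at hi
  calc (1 : ℝ) ≤ |(k : ℝ)| := by exact_mod_cast Int.one_le_abs hi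
    _ = ‖m i‖ := by rw [hk, Real.norm_eq_abs]
    _ ≤ ‖m‖ := PiLp.norm_apply_le m i

end Torus

section Plane

theorem int_mul_sub_one_nonneg (k : ℤ) : (0 : ℝ) ≤ k * (k - 1) := by
  rcases le_or_gt k 0 with hk | hk
  · have : (k : ℝ) ≤ 0 := by exact_mod_cast hk
    nlinarith
  · have : (1 : ℝ) ≤ k := by exact_mod_cast hk
    nlinarith

theorem quarter_lt_sq_add_sq {p q P Q : ℤ} (hpq : (p : ℝ) ^ 2 + q ^ 2 = 1) {t : ℝ} (ht0 : 0 < t)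
    (ht1 : t < 1) : 1 / 4 < (p / 2 - t * q - P) ^ 2 + (q / 2 + t * p - Q) ^ 2 := by
  have ht : 0 < (t - (p * Q - q * P : ℤ)) ^ 2 := by
    refine sq_pos_of_ne_zero (sub_ne_zero.2 fun h => ?_)
    obtain ⟨k, hk⟩ : ∃ k : ℤ, t = k := ⟨_, h⟩
    rw [hk] at ht0 ht1
    have : (0 : ℤ) < k := by exact_mod_cast ht0
    have : k < 1 := by exact_mod_cast ht1
    omega
  have hα := int_mul_sub_one_nonneg (p * P + q * Q)
  push_cast at ht hα
  -- the defect from `1 / 4` splits into these two non-negative terms once `p² + q² = 1`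
  calc (1 : ℝ) / 4 < 1 / 4 + (t - (p * Q - q * P)) ^ 2 + (p * P + q * Q) * (p * P + q * Q - 1) := by
        linarith
    _ = _ := by linear_combination (-(1 / 4) - t ^ 2 + P ^ 2 + Q ^ 2) * hpq

theorem half_lt_norm_half_smul_add_perp_sub {m m' : E 2} (hm : m ∈ ZLat 2) (hm1 : ‖m‖ = 1)
    (hm' : m' ∈ ZLat 2) {t : ℝ} (ht0 : 0 < t) (ht1 : t < 1) :
    1 / 2 < ‖(1 / 2 : ℝ) • m + t • !₂[-m 1, m 0] - m'‖ := by
  obtain ⟨⟨p, hp⟩, ⟨q, hq⟩⟩ := And.intro (hm 0) (hm 1)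
  obtain ⟨⟨P, hP⟩, ⟨Q, hQ⟩⟩ := And.intro (hm' 0) (hm' 1)
  have hpq : (p : ℝ) ^ 2 + q ^ 2 = 1 := by
    have := EuclideanSpace.real_norm_sq_eq m
    rwa [hm1, Fin.sum_univ_two, hp, hq, one_pow, eq_comm] at this
  have hcoord : ‖(1 / 2 : ℝ) • m + t • !₂[-m 1, m 0] - m'‖ ^ 2
      = (p / 2 - t * q - P) ^ 2 + (q / 2 + t * p - Q) ^ 2 := by
    rw [EuclideanSpace.real_norm_sq_eq, Fin.sum_univ_two]
    simp [hp, hq, hP, hQ]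
    ring
  refine lt_of_pow_lt_pow_left₀ 2 (norm_nonneg _) ?_
  linarith [quarter_lt_sq_add_sq (P := P) (Q := Q) hpq ht0 ht1]

theorem half_lt_norm_sub_sub_of_isOpen {U : Set (E 2)} (hU : IsOpen U) {c : E 2}
    (hUc : U ⊆ tpi 2 ⁻¹' closedBall (tpi 2 c) (1 / 2)) {y : E 2} (hy : y ∈ U)
    (hyc : ‖y - c‖ ≤ 1 / 2) {m : E 2} (hm : m ∈ ZLat 2) (hm0 : m ≠ 0) : 1 / 2 < ‖y - c - m‖ := by
  by_contra! hym
  have htri : ‖m‖ ≤ ‖y - c‖ + ‖y - c - m‖ := by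
    simpa using norm_sub_le (y - c) (y - c - m)
  have hm1 : ‖m‖ = 1 := le_antisymm (by linarith) (one_le_norm_of_mem_ZLat hm hm0)
  -- equality in the triangle inequality: by strict convexity `y - c` is the midpoint of `0` and `m`
  have hmid : y - c = (1 / 2 : ℝ) • m := by
    have := eq_midpoint_of_dist_eq_half (x := (0 : E 2)) (y := y - c) (z := m)
      (by rw [dist_zero_left, dist_zero_left, hm1]; linarith)
      (by rw [dist_eq_norm, dist_zero_left, hm1]; linarith)
    rw [this, midpoint_eq_smul_add, zero_add, invOf_eq_inv, one_div]
  obtain ⟨r, hr, hball⟩ := Metric.isOpen_iff.1 hU y hy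
  -- pushing `y` off this tangency point perpendicularly to `m` leaves every lattice ½-ball
  set e : E 2 := !₂[-m 1, m 0]
  have he : ‖e‖ = 1 := by
    rw [← hm1, ← sq_eq_sq₀ (norm_nonneg _) (norm_nonneg _), EuclideanSpace.real_norm_sq_eq,
      EuclideanSpace.real_norm_sq_eq, Fin.sum_univ_two, Fin.sum_univ_two]
    simp [e, add_comm]
  set t := min (r / 2) (1 / 2)
  have ht0 : 0 < t := by positivity
  have hyU : y + t • e ∈ U := hball <| by
    rw [mem_ball_iff_norm, add_sub_cancel_left, norm_smul, he, mul_one, Real.norm_of_nonneg ht0.le]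
    exact (min_le_left _ _).trans_lt (half_lt_self hr)
  obtain ⟨m', hm', hle⟩ := exists_mem_ZLat_norm_sub_le (hUc hyU)
  have hsplit : y + t • e - c - m' = (1 / 2 : ℝ) • m + t • e - m' := by rw [← hmid]; abel
  rw [hsplit] at hle
  exact hle.not_gt (half_lt_norm_half_smul_add_perp_sub hm hm1 hm' ht0
    ((min_le_right _ _).trans_lt (by norm_num)))

open scoped Pointwise in
theorem norm_sub_lt_half_of_isOpen {U : Set (E 2)} (hU : IsOpen U) {c : E 2}
    (hUc : U ⊆ tpi 2 ⁻¹' closedBall (tpi 2 c) (1 / 2)) {y : E 2} (hy : y ∈ U)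
    (hyc : ‖y - c‖ ≤ 1 / 2) : ‖y - c‖ < 1 / 2 := by
  -- the union of the closed ½-balls around the nonzero lattice points
  set S : Set (E 2) := ((ZLat 2 : Set (E 2)) \ ball 0 1) + closedBall (0 : E 2) (1 / 2)
  have hS : IsClosed S :=
    ((ZLat_closed 2).sdiff isOpen_ball).add_right_of_isCompact (isCompact_closedBall _ _)
  have hyS : y - c ∉ S := by
    rintro ⟨m, ⟨hm, hm1⟩, w, hw, hmw⟩
    refine (half_lt_norm_sub_sub_of_isOpen hU hUc hy hyc hm ?_).not_ge ?_
    · rintro rfl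
      exact hm1 (mem_ball_self one_pos)
    · rwa [← hmw, add_sub_cancel_left, ← dist_zero_right]
  have hnhds : closedBall c (1 / 2) ∈ 𝓝 y := by
    filter_upwards [hU.mem_nhds hy,
      (hS.isOpen_compl.preimage (continuous_sub_right c)).mem_nhds hyS] with y' hy'U hy'S
    obtain ⟨m, hm, hle⟩ := exists_mem_ZLat_norm_sub_le (hUc hy'U)
    rcases eq_or_ne m 0 with rfl | hm0
    · rwa [sub_zero, ← dist_eq_norm] at hle
    · refine absurd ⟨m, ⟨hm, fun hm1 => ?_⟩, y' - c - m, ?_, add_sub_cancel m (y' - c)⟩ hy'S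
      · exact (one_le_norm_of_mem_ZLat hm hm0).not_gt (mem_ball_zero_iff.1 hm1)
      · rwa [mem_closedBall_zero_iff]
  rw [← mem_ball_iff_norm, ← interior_closedBall c (by norm_num)]
  exact mem_interior_iff_mem_nhds.2 hnhds

theorem IsPreconnected.subset_ball_of_subset_preimage_closedBall {U : Set (E 2)}
    (hconn : IsPreconnected U) (hU : IsOpen U) {c : E 2} (hc : c ∈ U)
    (hUc : U ⊆ tpi 2 ⁻¹' closedBall (tpi 2 c) (1 / 2)) : U ⊆ ball c (1 / 2) := by
  refine hconn.subset_of_closure_inter_subset isOpen_ball ⟨c, hc, mem_ball_self (by norm_num)⟩ ?_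
  rintro y ⟨hy, hyU⟩
  rw [closure_ball c (by norm_num), mem_closedBall_iff_norm] at hy
  exact mem_ball_iff_norm.2 (norm_sub_lt_half_of_isOpen hU hUc hyU hy)

end Plane

namespace IsLift

variable {d : ℕ} {F : E d ≃ₜ E d} {f : T d ≃ₜ T d}

theorem tpi_iterate (hlift : IsLift F f) (n : ℕ) (x : E d) :
    tpi d (F^[n] x) = f^[n] (tpi d x) := by
  induction n with
  | zero => rfl
  | succ n ih => rw [Function.iterate_succ_apply', Function.iterate_succ_apply', hlift.1, ih]

theorem iterate_add_of_mem (hlift : IsLift F f) (n : ℕ) (x : E d) {m : E d} (hm : m ∈ ZLat d) :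
    F^[n] (x + m) = F^[n] x + m := by
  induction n with
  | zero => rfl
  | succ n ih => rw [Function.iterate_succ_apply', Function.iterate_succ_apply', ih, hlift.2 _ m hm]

theorem iterate_sub_self_eq_of_tpi_eq (hlift : IsLift F f) (n : ℕ) {x y : E d}
    (hxy : tpi d x = tpi d y) : F^[n] x - x = F^[n] y - y := by
  calc F^[n] x - x = F^[n] (y + (x - y)) - (y + (x - y)) := by rw [add_sub_cancel]
    _ = F^[n] y - y := by rw [hlift.iterate_add_of_mem n y (tpi_eq_tpi_iff.1 hxy)]; abel

end IsLift

section HalfStable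

variable {F : E 2 ≃ₜ E 2} {f : T 2 ≃ₜ T 2} {zh : E 2} {δ : ℝ}

theorem IsLift.norm_iterate_sub_lt_half (hlift : IsLift F f)
    (hst : ∀ n : ℕ, ∀ w ∈ ball (tpi 2 zh) δ, dist (f^[n] w) (f^[n] (tpi 2 zh)) ≤ 1 / 2)
    (n : ℕ) {w : E 2} (hw : w ∈ ball zh δ) : ‖F^[n] w - F^[n] zh‖ < 1 / 2 := by
  have hsub : F^[n] '' ball zh δ ⊆ ball (F^[n] zh) (1 / 2) := by
    refine ((convex_ball zh δ).isPreconnected.image _ (F.continuous.iterate n).continuousOn)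
      |>.subset_ball_of_subset_preimage_closedBall (F.isOpenMap.iterate n _ isOpen_ball)
        ⟨zh, mem_ball_self (pos_of_mem_ball hw), rfl⟩ ?_
    rintro _ ⟨w', hw', rfl⟩
    rw [mem_preimage, mem_closedBall, hlift.tpi_iterate, hlift.tpi_iterate]
    exact hst n _ ((dist_tpi_le w' zh).trans_lt hw')
  exact mem_ball_iff_norm.1 (hsub ⟨w, hw, rfl⟩)

theorem IsLift.exists_norm_iterate_add_sub_le_one (hlift : IsLift F f)
    (hst : ∀ n : ℕ, ∀ w ∈ ball (tpi 2 zh) δ, dist (f^[n] w) (f^[n] (tpi 2 zh)) ≤ 1 / 2)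
    {n : ℕ} {v : T 2} (hv : v ∈ ball (tpi 2 zh) δ) (hnv : f^[n] v ∈ ball (tpi 2 zh) δ) :
    ∃ m, ∀ k, ‖F^[k + n] zh - F^[k] zh - m‖ ≤ 1 := by
  obtain ⟨vh, hvh, rfl⟩ := exists_mem_ball_tpi_eq hv
  obtain ⟨u, hu, hnu⟩ := exists_mem_ball_tpi_eq hnv
  -- `F^[n] vh` and `u` lie over the same point, so the orbit of `u` is a translate of that of `vh`
  have hm : u - F^[n] vh ∈ ZLat 2 := tpi_eq_tpi_iff.1 (by rw [hnu, hlift.tpi_iterate])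
  refine ⟨F^[n] vh - u, fun k => ?_⟩
  have hku : F^[k] u = F^[k + n] vh - (F^[n] vh - u) := by
    rw [← add_sub_cancel (F^[n] vh) u, hlift.iterate_add_of_mem k _ hm, Function.iterate_add_apply]
    abel
  calc ‖F^[k + n] zh - F^[k] zh - (F^[n] vh - u)‖
      = ‖(F^[k + n] zh - F^[k + n] vh) + (F^[k] u - F^[k] zh)‖ := by rw [hku]; congr 1; abel
    _ ≤ 1 / 2 + 1 / 2 := (norm_add_le _ _).trans <| by
        rw [norm_sub_rev]
        exact add_le_add (hlift.norm_iterate_sub_lt_half hst _ hvh).le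
          (hlift.norm_iterate_sub_lt_half hst _ hu).le
    _ = 1 := by norm_num

theorem IsLift.norm_iterate_sub_sub_le (hlift : IsLift F f)
    (hst : ∀ n : ℕ, ∀ w ∈ ball (tpi 2 zh) δ, dist (f^[n] w) (f^[n] (tpi 2 zh)) ≤ 1 / 2)
    {w : E 2} (hw : tpi 2 w ∈ ball (tpi 2 zh) δ) (N : ℕ) :
    ‖(F^[N] w - w) - (F^[N] zh - zh)‖ ≤ 1 / 2 + δ := by
  obtain ⟨w', hw', hw'w⟩ := exists_mem_ball_tpi_eq hw
  rw [← hlift.iterate_sub_self_eq_of_tpi_eq N hw'w]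
  calc ‖(F^[N] w' - w') - (F^[N] zh - zh)‖ = ‖(F^[N] w' - F^[N] zh) - (w' - zh)‖ := by
        congr 1; abel
    _ ≤ 1 / 2 + δ := (norm_sub_le _ _).trans (add_le_add
        (hlift.norm_iterate_sub_lt_half hst N hw').le (mem_ball_iff_norm.1 hw').le)

theorem IsLift.norm_sub_le_of_mem_rotU (hlift : IsLift F f)
    (hst : ∀ n : ℕ, ∀ w ∈ ball (tpi 2 zh) δ, dist (f^[n] w) (f^[n] (tpi 2 zh)) ≤ 1 / 2)
    {n : ℕ} (hn : 0 < n) {m : E 2} (hm : ∀ k, ‖F^[k + n] zh - F^[k] zh - m‖ ≤ 1)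
    {ρ : E 2} (hρ : ρ ∈ rotU F (ball (tpi 2 zh) δ)) : ‖ρ - (n : ℝ)⁻¹ • m‖ ≤ 1 / n := by
  obtain ⟨C, hC⟩ := exists_norm_sub_sub_smul_le (u := fun k => F^[k] zh) hn hm
  refine norm_sub_le_of_mem_rotRel (C := 1 / 2 + δ + C) (fun w hw N => ?_) hρ
  calc ‖F^[N] w - w - (N : ℝ) • (n : ℝ)⁻¹ • m‖
      ≤ ‖(F^[N] w - w) - (F^[N] zh - zh)‖ + ‖F^[N] zh - zh - (N : ℝ) • (n : ℝ)⁻¹ • m‖ :=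
        norm_sub_le_norm_sub_add_norm_sub _ _ _
    _ ≤ (1 / 2 + δ) + (C + N * (1 / n)) :=
        add_le_add (hlift.norm_iterate_sub_sub_le hst hw N) (hC N)
    _ = 1 / 2 + δ + C + N * (1 / n) := by ring

end HalfStable

theorem chaotic_region_not_half_lyapunov_stable_general
    (F : E 2 ≃ₜ E 2) (f : T 2 ≃ₜ T 2) (hlift : IsLift F f)
    (hnw : ∀ V : Set (T 2), IsOpen V → V.Nonempty →
      ∃ n : ℕ, 1 ≤ n ∧ ((⇑f)^[n] '' V ∩ V).Nonempty)
    (z : T 2)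
    (hz : ∀ U : Set (T 2), IsOpen U → z ∈ U →
      (interior (convexHull ℝ (rotU (⇑F) U))).Nonempty)
    (δ : ℝ) (hδ : 0 < δ) :
    ∃ n : ℕ, ∃ w ∈ Metric.ball z δ, dist ((⇑f)^[n] w) ((⇑f)^[n] z) > 1 / 2 := by
  by_contra! hst
  obtain ⟨zh, rfl⟩ : ∃ zh, tpi 2 zh = z := QuotientAddGroup.mk_surjective z
  obtain ⟨ρ₁, hρ₁, ρ₂, hρ₂, hne⟩ :=
    Set.nontrivial_of_interior_convexHull_nonempty (hz _ isOpen_ball (mem_ball_self hδ))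
  refine hne (eq_of_forall_dist_le fun ε hε => ?_)
  obtain ⟨M, hM⟩ := exists_nat_gt (2 / ε)
  obtain ⟨n, hMn, v, hv, hnv⟩ := exists_lt_iterate_mem_of_nonwandering f.continuous hnw M
    isOpen_ball ⟨_, mem_ball_self hδ⟩
  obtain ⟨m, hm⟩ := hlift.exists_norm_iterate_add_sub_le_one hst hv hnv
  have hn : 0 < n := M.zero_le.trans_lt hMn
  have hn' : (0 : ℝ) < n := Nat.cast_pos.2 hn
  calc dist ρ₁ ρ₂ ≤ dist ρ₁ ((n : ℝ)⁻¹ • m) + dist ρ₂ ((n : ℝ)⁻¹ • m) := dist_triangle_right _ _ _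
    _ ≤ 1 / n + 1 / n := by
        rw [dist_eq_norm, dist_eq_norm]
        exact add_le_add (hlift.norm_sub_le_of_mem_rotU hst hn hm hρ₁)
          (hlift.norm_sub_le_of_mem_rotU hst hn hm hρ₂)
    _ ≤ ε := by
        rw [div_lt_iff₀ hε] at hM
        have : (M : ℝ) < n := by exact_mod_cast hMn
        rw [← add_div, div_le_iff₀ hn']
        nlinarith

/-- **Proposition (no Lyapunov stability in the chaotic region, part (a)).**
If `f` is non-wandering and `ρ(F)` has non-empty interior, then no point of the
chaotic region `C(f)` is `1/2`-Lyapunov stable: for every `z ∈ C(f)` and every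
`δ > 0` some point of `B_δ(z)` is moved at distance `> 1/2` from `f^n(z)` by some
iterate `f^n`. -/
theorem chaotic_region_not_half_lyapunov_stable
    (F : E 2 ≃ₜ E 2) (f : T 2 ≃ₜ T 2) (hlift : IsLift F f)
    (hnw : ∀ V : Set (T 2), IsOpen V → V.Nonempty →
      ∃ n : ℕ, 1 ≤ n ∧ ((⇑f)^[n] '' V ∩ V).Nonempty)
    (hint : (interior (rotSet (⇑F))).Nonempty)
    (z : T 2)
    (hz : ∀ U : Set (T 2), IsOpen U → z ∈ U →
      (interior (convexHull ℝ (rotU (⇑F) U))).Nonempty)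
    (δ : ℝ) (hδ : 0 < δ) :
    ∃ n : ℕ, ∃ w ∈ Metric.ball z δ, dist ((⇑f)^[n] w) ((⇑f)^[n] z) > 1 / 2 :=
  chaotic_region_not_half_lyapunov_stable_general F f hlift hnw z hz δ hδ
end
end

section
/- Let F : ℝ^d → ℝ^d be a lift of a homeomorphism f of the d-torus homotopic to the identity. For any U ⊆ T^d, the rotation subset ρ_U(F) is compact; moreover, if U is connected then ρ_U(F) is connected. -/
noncomputable section
open Filter Topology Metric Set MeasureTheory

/-! Let `avgDisp F n z = (F^[n] z - z) / n`. Then `ρ_U(F)` is the Kuratowski upper limit of the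
sets `A n = avgDisp F n '' π⁻¹(U)`. The displacement `F z - z` is `ℤ^d`-periodic, hence bounded by
some `C`, so all `A n` lie in the closed ball of radius `C` and the upper limit is compact. Each
`avgDisp F n` is periodic too, so `A n` is a continuous image of `U` and is connected when `U` is;
moreover `avgDisp F (n + 1) z` is within `2C / (n + 1)` of `avgDisp F n z`. Slightly thickening
the `A n` therefore gives a chain of connected sets, whose tails have closures forming a nested
sequence of connected compacta with the same intersection, and such an intersection is connected.
-/

def kuratowskiLimsup {X : Type*} [TopologicalSpace X] (A : ℕ → Set X) : Set X :=
  ⋂ N, closure (⋃ n ≥ N, A n)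

section Kuratowski

variable {X : Type*}

theorem isClosed_kuratowskiLimsup [TopologicalSpace X] (A : ℕ → Set X) :
    IsClosed (kuratowskiLimsup A) :=
  isClosed_iInter fun _ => isClosed_closure

theorem kuratowskiLimsup_subset_closure_iUnion [TopologicalSpace X] (A : ℕ → Set X) :
    kuratowskiLimsup A ⊆ closure (⋃ n, A n) :=
  (iInter_subset _ 0).trans (closure_mono (iUnion₂_subset fun n _ => subset_iUnion A n))

theorem kuratowskiLimsup_mono [TopologicalSpace X] {A B : ℕ → Set X} (h : ∀ n, A n ⊆ B n) :
    kuratowskiLimsup A ⊆ kuratowskiLimsup B :=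
  iInter_mono fun _ => closure_mono (biUnion_mono Subset.rfl fun n _ => h n)

theorem setOf_tendsto_eq_kuratowskiLimsup [PseudoMetricSpace X] {Y : Type*}
    (g : ℕ → Y → X) (W : Set Y) :
    {ρ | ∃ (n : ℕ → ℕ) (z : ℕ → Y), Tendsto n atTop atTop ∧ (∀ i, z i ∈ W) ∧
      Tendsto (fun i => g (n i) (z i)) atTop (𝓝 ρ)} = kuratowskiLimsup fun n => g n '' W := by
  ext ρ
  constructor
  · rintro ⟨n, z, hn, hz, hlim⟩
    refine mem_iInter.2 fun N => mem_closure_of_tendsto hlim ?_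
    filter_upwards [hn.eventually_ge_atTop N] with i hi
    exact mem_biUnion hi ⟨z i, hz i, rfl⟩
  · intro hρ
    have hnear : ∀ i : ℕ, ∃ p : ℕ × Y, i ≤ p.1 ∧ p.2 ∈ W ∧
        dist (g p.1 p.2) ρ < 1 / ((i : ℝ) + 1) := by
      intro i
      obtain ⟨y, hy, hdy⟩ := Metric.mem_closure_iff.1 (mem_iInter.1 hρ i) _ Nat.one_div_pos_of_nat
      simp only [mem_iUnion, mem_image] at hy
      obtain ⟨n, hn, z, hzW, rfl⟩ := hy
      exact ⟨(n, z), hn, hzW, by rwa [dist_comm]⟩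
    choose p hp hpW hpρ using hnear
    refine ⟨fun i => (p i).1, fun i => (p i).2, tendsto_atTop_mono hp tendsto_id, hpW, ?_⟩
    exact tendsto_iff_dist_tendsto_zero.2 <| squeeze_zero (fun _ => dist_nonneg)
      (fun i => (hpρ i).le) tendsto_one_div_add_atTop_nhds_zero_nat

theorem kuratowskiLimsup_thickening_subset [PseudoMetricSpace X] {A : ℕ → Set X} {δ : ℕ → ℝ}
    (hδ : Tendsto δ atTop (𝓝 0)) :
    kuratowskiLimsup (fun n => thickening (δ n) (A n)) ⊆ kuratowskiLimsup A := by
  intro ρ hρ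
  refine mem_iInter.2 fun N => Metric.mem_closure_iff.2 fun ε hε => ?_
  obtain ⟨M, hM⟩ := (eventually_ge_atTop N).and (hδ.eventually_lt_const (half_pos hε))
    |>.exists_forall_of_atTop
  obtain ⟨y, hy, hρy⟩ := Metric.mem_closure_iff.1 (mem_iInter.1 hρ M) _ (half_pos hε)
  simp only [mem_iUnion] at hy
  obtain ⟨n, hn, hyn⟩ := hy
  obtain ⟨a, ha, hya⟩ := Metric.mem_thickening_iff.1 hyn
  refine ⟨a, mem_biUnion (hM n hn).1 ha, ?_⟩
  calc dist ρ a ≤ dist ρ y + dist y a := dist_triangle _ _ _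
    _ < ε / 2 + ε / 2 := add_lt_add hρy (hya.trans (hM n hn).2)
    _ = ε := add_halves ε

theorem isPreconnected_iInter_of_antitone [TopologicalSpace X] [T2Space X] {K : ℕ → Set X}
    (hK : Antitone K) (hc : ∀ n, IsCompact (K n)) (hconn : ∀ n, IsPreconnected (K n)) :
    IsPreconnected (⋂ n, K n) := by
  rw [isPreconnected_iff_subset_of_fully_disjoint_closed (isClosed_iInter fun n => (hc n).isClosed)]
  intro u v hu hv hsub huv
  have hS : IsCompact (⋂ n, K n) :=
    (hc 0).of_isClosed_subset (isClosed_iInter fun n => (hc n).isClosed) (iInter_subset K 0)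
  obtain ⟨u', v', hu', hv', hu'u, hv'v, huv'⟩ :=
    SeparatedNhds.of_isCompact_isCompact (hS.inter_right hu) (hS.inter_right hv)
      (huv.mono inter_subset_right inter_subset_right)
  obtain ⟨N, hN⟩ : ∃ N, K N ⊆ u' ∪ v' :=
    exists_subset_nhds_of_isCompact hK.directed_ge hc fun x hx =>
      (hu'.union hv').mem_nhds ((hsub hx).imp (fun h => hu'u ⟨hx, h⟩) fun h => hv'v ⟨hx, h⟩)
  refine ((hconn N).subset_or_subset hu' hv' huv' hN).imp (fun h x hx => ?_) fun h x hx => ?_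
  · exact (hsub hx).resolve_right fun hxv =>
      disjoint_left.1 huv' (h (mem_iInter.1 hx N)) (hv'v ⟨hx, hxv⟩)
  · exact (hsub hx).resolve_left fun hxu =>
      disjoint_left.1 huv' (hu'u ⟨hx, hxu⟩) (h (mem_iInter.1 hx N))

end Kuratowski

theorem IsPreconnected.thickening {V : Type*} [NormedAddCommGroup V] [NormedSpace ℝ V]
    {s : Set V} (hs : IsPreconnected s) (δ : ℝ) : IsPreconnected (Metric.thickening δ s) := by
  have h : Metric.thickening δ s = (fun p : V × V => p.1 + p.2) '' (s ×ˢ ball 0 δ) := by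
    rw [image_prod, image2_add, add_ball_zero]
  rw [h]
  exact (hs.prod isPreconnected_ball).image _ (by fun_prop)

theorem isConnected_kuratowskiLimsup {V : Type*} [NormedAddCommGroup V] [NormedSpace ℝ V]
    [ProperSpace V] {A : ℕ → Set V} {δ : ℕ → ℝ} (hconn : ∀ n, IsConnected (A n))
    (hbdd : Bornology.IsBounded (⋃ n, A n)) (hδ : Tendsto δ atTop (𝓝 0))
    (hstep : ∀ n, A (n + 1) ⊆ thickening (δ n) (A n)) :
    IsConnected (kuratowskiLimsup A) := by
  set B : ℕ → Set V := fun n => thickening (δ n) (A n)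
  set K : ℕ → Set V := fun N => closure (⋃ n ≥ N, B n)
  have hδ_pos : ∀ n, 0 < δ n := fun n => by
    by_contra! h
    simpa [thickening_of_nonpos h] using (hconn (n + 1)).nonempty.mono (hstep n)
  have hAB : ∀ n, A n ⊆ B n := fun n => self_subset_thickening (hδ_pos n) _
  have hK_anti : Antitone K := fun M N hMN =>
    closure_mono (biUnion_subset_biUnion_left fun _ hn => hMN.trans hn)
  obtain ⟨D, hD⟩ := hδ.bddAbove_range
  have hK_compact : ∀ N, IsCompact (K N) := fun N =>
    isCompact_of_isClosed_isBounded isClosed_closure <| (hbdd.thickening (δ := D)).closure.subset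
      (closure_mono (iUnion₂_subset fun n _ =>
        (thickening_mono (hD ⟨n, rfl⟩) _).trans
          (thickening_subset_of_subset _ (subset_iUnion A n))))
  have hK_conn : ∀ N, IsPreconnected (K N) := fun N =>
    (IsPreconnected.biUnion_of_chain ordConnected_Ici
      (fun n _ => (hconn n).isPreconnected.thickening _) fun n _ _ =>
        (hconn (n + 1)).nonempty.mono (subset_inter (hstep n) (hAB (n + 1)))).closure
  have hK_ne : ∀ N, (K N).Nonempty := fun N =>
    (((hconn N).nonempty.mono (hAB N)).mono (subset_biUnion_of_mem (u := B) (le_refl N))).mono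
      subset_closure
  have hlimsup : kuratowskiLimsup A = ⋂ N, K N :=
    (kuratowskiLimsup_mono hAB).antisymm (kuratowskiLimsup_thickening_subset hδ)
  rw [hlimsup]
  exact ⟨IsCompact.nonempty_iInter_of_sequence_nonempty_isCompact_isClosed K
    (fun N => hK_anti N.le_succ) hK_ne (hK_compact 0) fun N => isClosed_closure,
    isPreconnected_iInter_of_antitone hK_anti hK_compact hK_conn⟩

theorem IsPreconnected.image_preimage_mk {G X : Type*} [AddGroup G] [TopologicalSpace G]
    [TopologicalSpace X] {H : AddSubgroup G} {φ : G → X} (hφ : Continuous φ)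
    (hH : ∀ z, ∀ m ∈ H, φ (z + m) = φ z) {U : Set (G ⧸ H)} (hU : IsPreconnected U) :
    IsPreconnected (φ '' (QuotientAddGroup.mk ⁻¹' U)) := by
  let φ' : G ⧸ H → X := fun u => Quotient.liftOn' u φ fun x y hxy => by
    rw [← hH x _ (QuotientAddGroup.leftRel_apply.1 hxy), add_neg_cancel_left]
  have hφ' : φ = φ' ∘ QuotientAddGroup.mk := rfl
  rw [hφ', image_comp, image_preimage_eq U QuotientAddGroup.mk_surjective]
  exact hU.image _ (hφ.quotient_liftOn' _).continuousOn

theorem isBounded_range_of_periodic_ZLat {X : Type*} [PseudoMetricSpace X] {d : ℕ}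
    {φ : E d → X} (hφ : Continuous φ) (hper : ∀ z, ∀ m ∈ ZLat d, φ (z + m) = φ z) :
    Bornology.IsBounded (range φ) := by
  let cube : Set (E d) := WithLp.toLp 2 '' univ.pi fun _ => Icc 0 1
  have hcube : IsCompact cube :=
    (isCompact_univ_pi fun _ => isCompact_Icc).image (PiLp.continuous_toLp 2 _)
  refine (hcube.image hφ).isBounded.subset ?_
  rintro _ ⟨z, rfl⟩
  refine ⟨WithLp.toLp 2 fun i => Int.fract (z i), ⟨_, fun i _ =>
    ⟨Int.fract_nonneg _, (Int.fract_lt_one _).le⟩, rfl⟩, ?_⟩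
  have hm : WithLp.toLp 2 (fun i => (⌊z i⌋ : ℝ)) ∈ ZLat d := fun i => ⟨⌊z i⌋, rfl⟩
  rw [← hper _ _ hm]
  congr 1
  ext i
  simp [Int.fract_add_floor]

-- `avgDisp F 0 = 0`, since `(0 : ℝ)⁻¹ = 0`.
def avgDisp {V : Type*} [AddCommGroup V] [Module ℝ V] (F : V → V) (n : ℕ) (z : V) : V :=
  (n : ℝ)⁻¹ • (F^[n] z - z)

section AvgDisp

variable {V : Type*} [SeminormedAddCommGroup V] {F : V → V} {C : ℝ}

theorem norm_iterate_sub_le (hC : ∀ z, ‖F z - z‖ ≤ C) (n : ℕ) (z : V) :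
    ‖F^[n] z - z‖ ≤ n * C := by
  induction n with
  | zero => simp
  | succ n ih =>
    calc ‖F^[n + 1] z - z‖ = ‖(F (F^[n] z) - F^[n] z) + (F^[n] z - z)‖ := by
          rw [Function.iterate_succ_apply', sub_add_sub_cancel]
      _ ≤ C + n * C := (norm_add_le _ _).trans (add_le_add (hC _) ih)
      _ = (n + 1 : ℕ) * C := by push_cast; ring

variable [NormedSpace ℝ V]

theorem continuous_avgDisp (hF : Continuous F) (n : ℕ) : Continuous (avgDisp F n) :=
  ((hF.iterate n).sub continuous_id).const_smul _

theorem avgDisp_add_of_commute {m : V} (hm : ∀ z, F (z + m) = F z + m) (n : ℕ) (z : V) :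
    avgDisp F n (z + m) = avgDisp F n z := by
  rw [avgDisp, avgDisp, Function.Commute.iterate_left (g := (· + m)) hm n z,
    add_sub_add_right_eq_sub]

theorem norm_avgDisp_le (hC : ∀ z, ‖F z - z‖ ≤ C) (n : ℕ) (z : V) : ‖avgDisp F n z‖ ≤ C := by
  rcases n.eq_zero_or_pos with rfl | hn
  · simpa [avgDisp] using (norm_nonneg _).trans (hC 0)
  · have hn' : (0 : ℝ) < n := Nat.cast_pos.2 hn
    calc ‖avgDisp F n z‖ = (n : ℝ)⁻¹ * ‖F^[n] z - z‖ := by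
          rw [avgDisp, norm_smul, norm_inv, RCLike.norm_natCast]
      _ ≤ (n : ℝ)⁻¹ * (n * C) := by gcongr; exact norm_iterate_sub_le hC n z
      _ = C := by field_simp

theorem avgDisp_succ_sub (F : V → V) (n : ℕ) (z : V) :
    avgDisp F (n + 1) z - avgDisp F n z =
      ((n : ℝ) + 1)⁻¹ • (F (F^[n] z) - F^[n] z - avgDisp F n z) := by
  rcases n.eq_zero_or_pos with rfl | hn
  · simp [avgDisp]
  · have hn' : (n : ℝ) ≠ 0 := Nat.cast_ne_zero.2 hn.ne'
    simp only [avgDisp, Function.iterate_succ_apply', Nat.cast_succ]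
    match_scalars <;> field_simp <;> ring

theorem norm_avgDisp_succ_sub_le (hC : ∀ z, ‖F z - z‖ ≤ C) (n : ℕ) (z : V) :
    ‖avgDisp F (n + 1) z - avgDisp F n z‖ ≤ 2 * C / (n + 1) := by
  rw [avgDisp_succ_sub, norm_smul, norm_inv, div_eq_inv_mul, two_mul]
  norm_cast
  gcongr
  exact (norm_sub_le _ _).trans (add_le_add (hC _) (norm_avgDisp_le hC n z))

theorem image_avgDisp_succ_subset_thickening (hC : ∀ z, ‖F z - z‖ ≤ C) (W : Set V) {n : ℕ}
    {δ : ℝ} (hδ : 2 * C / (n + 1) < δ) :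
    avgDisp F (n + 1) '' W ⊆ thickening δ (avgDisp F n '' W) := by
  rintro _ ⟨z, hz, rfl⟩
  exact Metric.mem_thickening_iff.2
    ⟨_, mem_image_of_mem _ hz, by
      rw [dist_eq_norm]; exact (norm_avgDisp_succ_sub_le hC n z).trans_lt hδ⟩

end AvgDisp

theorem IsLift.exists_norm_sub_le {d : ℕ} {F : E d ≃ₜ E d} {f : T d ≃ₜ T d} (h : IsLift F f) :
    ∃ C, ∀ z, ‖F z - z‖ ≤ C := by
  have hper : ∀ z, ∀ m ∈ ZLat d, F (z + m) - (z + m) = F z - z := fun z m hm => by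
    rw [h.2 z m hm, add_sub_add_right_eq_sub]
  obtain ⟨C, hC⟩ := isBounded_iff_forall_norm_le.1
    (isBounded_range_of_periodic_ZLat (F.continuous.sub continuous_id) hper)
  exact ⟨C, fun z => hC _ ⟨z, rfl⟩⟩

/-- **Lemma (compactness and connectedness of rotation subsets).**
For any `U ⊆ T^d` the rotation subset `ρ_U(F)` is compact, and if `U` is connected
then so is `ρ_U(F)`. -/
theorem rotU_compact_and_connected
    {d : ℕ} (F : E d ≃ₜ E d) (f : T d ≃ₜ T d) (hlift : IsLift F f)
    (U : Set (T d)) :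
    IsCompact (rotU (⇑F) U) ∧ (IsConnected U → IsConnected (rotU (⇑F) U)) := by
  obtain ⟨C, hC⟩ := hlift.exists_norm_sub_le
  let A : ℕ → Set (E d) := fun n => avgDisp F n '' (tpi d ⁻¹' U)
  have hrot : rotU F U = kuratowskiLimsup A :=
    setOf_tendsto_eq_kuratowskiLimsup (avgDisp F) (tpi d ⁻¹' U)
  have hbdd : Bornology.IsBounded (⋃ n, A n) :=
    (isBounded_closedBall (x := (0 : E d)) (r := C)).subset <| iUnion_subset fun n => by
      rintro _ ⟨z, -, rfl⟩
      exact mem_closedBall_zero_iff.2 (norm_avgDisp_le hC n z)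
  rw [hrot]
  refine ⟨isCompact_of_isClosed_isBounded (isClosed_kuratowskiLimsup A)
    (hbdd.closure.subset (kuratowskiLimsup_subset_closure_iUnion A)), fun hU => ?_⟩
  refine isConnected_kuratowskiLimsup (δ := fun n => (2 * C + 1) / (n + 1)) (fun n => ?_) hbdd
    ?_ fun n => image_avgDisp_succ_subset_thickening hC _ ?_
  · exact ⟨(hU.nonempty.preimage QuotientAddGroup.mk_surjective).image _,
      hU.isPreconnected.image_preimage_mk (continuous_avgDisp F.continuous n)
        fun z m hm => avgDisp_add_of_commute (fun w => hlift.2 w m hm) n z⟩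
  · simpa [div_eq_mul_inv] using tendsto_one_div_add_atTop_nhds_zero_nat.const_mul (2 * C + 1)
  · gcongr; linarith
end
end

section
/- Let F : ℝ^d → ℝ^d be a lift of a homeomorphism f of the d-torus homotopic to the identity, let v ∈ ℝ^d \ {0}, and let μ be an ergodic f-invariant Borel probability measure on T^d with rotation vector ρ_μ = ∫_{T^d} (F(z) − z) dμ(z). Then there is no constant s > 0 with the property that for μ-almost every z there exists a positive integer n_z with ⟨F^{n_z}(z̃) − z̃ − n_z ρ_μ, v⟩ ≥ s·n_z (where z̃ is any lift of z; this quantity is independent of the lift). -/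
noncomputable section
open Filter Topology Metric Set MeasureTheory

instance (d : ℕ) : MeasurableSpace (T d) := borel _
instance (d : ℕ) : BorelSpace (T d) := ⟨rfl⟩

/-!
The displacement `F z̃ - z̃` descends to `φ` on the torus, so `F^[n] z̃ - z̃` is the Birkhoff
sum `S_n φ z`. For `g = ⟪φ - ρ_μ, v⟫ - s/2` the hypothesis says that almost every point has a
positive Birkhoff sum `S_n g`. By the maximal ergodic theorem the integral of `g` over the set
of such points, hence over the whole torus, is nonnegative; but `∫ g = -s/2`.
-/

instance (d : ℕ) : CompactSpace (T d) := by
  set cube : Set (E d) := (EuclideanSpace.equiv (Fin d) ℝ).symm '' univ.pi fun _ => Icc 0 1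
  have hcube : IsCompact cube :=
    (isCompact_univ_pi fun _ => isCompact_Icc).image (ContinuousLinearEquiv.continuous _)
  refine ⟨?_⟩
  convert hcube.image (QuotientAddGroup.continuous_mk (N := ZLat d))
  refine (eq_univ_of_forall fun x => ?_).symm
  obtain ⟨z, rfl⟩ := QuotientAddGroup.mk_surjective x
  set m : E d := WithLp.toLp 2 fun i => (⌊z i⌋ : ℝ)
  have hm : m ∈ ZLat d := fun i => ⟨⌊z i⌋, rfl⟩
  refine ⟨z - m, ⟨fun i => Int.fract (z i),
    fun i _ => ⟨Int.fract_nonneg _, (Int.fract_lt_one _).le⟩, rfl⟩, ?_⟩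
  rw [QuotientAddGroup.mk_sub, (QuotientAddGroup.eq_zero_iff m).mpr hm, sub_zero]

theorem MeasureTheory.MeasurePreserving.integral_comp_of_aestronglyMeasurable
    {X Y G : Type*} [MeasurableSpace X] [MeasurableSpace Y]
    [NormedAddCommGroup G] [NormedSpace ℝ G]
    {μ : Measure X} {ν : Measure Y} {f : X → Y} (hf : MeasurePreserving f μ ν) {h : Y → G}
    (hh : AEStronglyMeasurable h ν) : ∫ x, h (f x) ∂μ = ∫ y, h y ∂ν := by
  rw [← hf.map_eq] at hh ⊢
  exact (integral_map hf.aemeasurable hh).symm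

section BirkhoffMax

variable {X : Type*} {T : X → X} {g : X → ℝ}

def birkhoffMax (T : X → X) (g : X → ℝ) (N : ℕ) : X → ℝ :=
  (Finset.range (N + 1)).sup' Finset.nonempty_range_add_one fun k => birkhoffSum T g k

theorem birkhoffMax_apply (N : ℕ) (x : X) :
    birkhoffMax T g N x =
      (Finset.range (N + 1)).sup' Finset.nonempty_range_add_one fun k => birkhoffSum T g k x :=
  Finset.sup'_apply _ _ _

theorem birkhoffMax_nonneg (N : ℕ) (x : X) : 0 ≤ birkhoffMax T g N x := by
  rw [birkhoffMax_apply]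
  exact Finset.le_sup'_of_le _ (Finset.mem_range.mpr N.succ_pos) (birkhoffSum_zero T g x).ge

theorem birkhoffMax_pos_iff (N : ℕ) (x : X) :
    0 < birkhoffMax T g N x ↔ ∃ k ≤ N, 0 < birkhoffSum T g k x := by
  simp only [birkhoffMax_apply, Finset.lt_sup'_iff, Finset.mem_range, Nat.lt_succ_iff]

/-- Garsia's inequality: a positive maximum is attained at some `S_{j+1} g x`, and
`S_{j+1} g x = g x + S_j g (T x)`. -/
theorem birkhoffMax_le_add_birkhoffMax_apply {N : ℕ} {x : X} (hx : 0 < birkhoffMax T g N x) :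
    birkhoffMax T g N x ≤ g x + birkhoffMax T g N (T x) := by
  obtain ⟨k, hk, hmax⟩ := Finset.exists_mem_eq_sup' Finset.nonempty_range_add_one
    fun k => birkhoffSum T g k x
  rw [birkhoffMax_apply, hmax] at hx ⊢
  obtain _ | j := k
  · simp [birkhoffSum_zero] at hx
  · rw [birkhoffSum_succ', birkhoffMax_apply]
    gcongr
    exact Finset.le_sup' (fun k => birkhoffSum T g k (T x))
      (Finset.mem_range.mpr (Nat.lt_of_succ_lt (Finset.mem_range.mp hk)))

end BirkhoffMax

section MaximalErgodic

variable {X : Type*} [MeasurableSpace X] {μ : Measure X} {T : X → X} {g : X → ℝ}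

theorem integrable_birkhoffSum (hT : MeasurePreserving T μ μ) (hg : Integrable g μ) (n : ℕ) :
    Integrable (birkhoffSum T g n) μ :=
  integrable_finsetSum _ fun k _ => (hT.iterate k).integrable_comp_of_integrable hg

theorem measurable_birkhoffSum (hT : Measurable T) (hg : Measurable g) (n : ℕ) :
    Measurable (birkhoffSum T g n) :=
  Finset.measurable_sum _ fun k _ => hg.comp (hT.iterate k)

theorem integrable_birkhoffMax (hT : MeasurePreserving T μ μ) (hg : Integrable g μ) (N : ℕ) :
    Integrable (birkhoffMax T g N) μ :=
  Finset.sup'_induction (p := fun h => Integrable h μ) _ _ (fun _ h₁ _ h₂ => h₁.sup h₂)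
    fun k _ => integrable_birkhoffSum hT hg k

theorem measurable_birkhoffMax (hT : Measurable T) (hg : Measurable g) (N : ℕ) :
    Measurable (birkhoffMax T g N) :=
  Finset.measurable_sup' _ fun k _ => measurable_birkhoffSum hT hg k

theorem setIntegral_birkhoffMax_pos_nonneg [IsFiniteMeasure μ] (hT : MeasurePreserving T μ μ)
    (hgm : Measurable g) (hg : Integrable g μ) (N : ℕ) :
    0 ≤ ∫ x in {x | 0 < birkhoffMax T g N x}, g x ∂μ := by
  set M := birkhoffMax T g N
  set A := {x | 0 < M x}
  have hA : MeasurableSet A :=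
    measurableSet_lt measurable_const (measurable_birkhoffMax hT.measurable hgm N)
  have hM : Integrable M μ := integrable_birkhoffMax hT hg N
  have hMT : Integrable (fun x => M (T x)) μ := hT.integrable_comp_of_integrable hM
  calc 0 = ∫ x, M x ∂μ - ∫ x, M (T x) ∂μ := by
        rw [hT.integral_comp_of_aestronglyMeasurable hM.aestronglyMeasurable, sub_self]
    _ ≤ ∫ x in A, M x ∂μ - ∫ x in A, M (T x) ∂μ := by
        rw [← setIntegral_eq_integral_of_forall_compl_eq_zero (s := A) (f := M) fun x hx =>
          (birkhoffMax_nonneg N x).antisymm' (not_lt.mp hx)]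
        exact sub_le_sub_left (setIntegral_le_integral hMT
          (ae_of_all _ fun x => birkhoffMax_nonneg N (T x))) _
    _ = ∫ x in A, (M x - M (T x)) ∂μ := (integral_sub hM.integrableOn hMT.integrableOn).symm
    _ ≤ ∫ x in A, g x ∂μ := setIntegral_mono_on (hM.sub hMT).integrableOn hg.integrableOn hA
        fun x hx => by linarith [birkhoffMax_le_add_birkhoffMax_apply (T := T) hx]

/-- The maximal ergodic theorem. -/
theorem setIntegral_exists_birkhoffSum_pos_nonneg [IsFiniteMeasure μ]
    (hT : MeasurePreserving T μ μ) (hgm : Measurable g) (hg : Integrable g μ) :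
    0 ≤ ∫ x in {x | ∃ n, 0 < birkhoffSum T g n x}, g x ∂μ := by
  have hU : ⋃ N, {x | 0 < birkhoffMax T g N x} = {x | ∃ n, 0 < birkhoffSum T g n x} := by
    ext x
    simp only [mem_iUnion, mem_ofPred_eq, birkhoffMax_pos_iff]
    exact ⟨fun ⟨_, n, _, hn⟩ => ⟨n, hn⟩, fun ⟨n, hn⟩ => ⟨n, n, le_rfl, hn⟩⟩
  rw [← hU]
  refine ge_of_tendsto' (tendsto_setIntegral_of_monotone ?_ ?_ hg.integrableOn)
    (setIntegral_birkhoffMax_pos_nonneg hT hgm hg)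
  · exact fun N => measurableSet_lt measurable_const (measurable_birkhoffMax hT.measurable hgm N)
  · intro N N' h x
    simp only [mem_ofPred_eq, birkhoffMax_pos_iff]
    exact fun ⟨k, hk, hpos⟩ => ⟨k, hk.trans h, hpos⟩

theorem integral_nonneg_of_ae_exists_birkhoffSum_pos [IsFiniteMeasure μ]
    (hT : MeasurePreserving T μ μ) (hg : Integrable g μ)
    (hpos : ∀ᵐ x ∂μ, ∃ n, 0 < birkhoffSum T g n x) : 0 ≤ ∫ x, g x ∂μ := by
  set g' := hg.aestronglyMeasurable.mk g
  have hgg' : g =ᵐ[μ] g' := hg.aestronglyMeasurable.ae_eq_mk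
  have hsum : ∀ᵐ x ∂μ, ∀ n, birkhoffSum T g n x = birkhoffSum T g' n x :=
    ae_all_iff.mpr fun n => hT.quasiMeasurePreserving.birkhoffSum_ae_eq_of_ae_eq hgg' n
  have hpos' : ∀ᵐ x ∂μ, x ∈ {x | ∃ n, 0 < birkhoffSum T g' n x} := by
    filter_upwards [hpos, hsum] with x ⟨n, hn⟩ hx
    exact ⟨n, hx n ▸ hn⟩
  rw [integral_congr_ae hgg', ← Measure.restrict_eq_self_of_ae_mem hpos']
  exact setIntegral_exists_birkhoffSum_pos_nonneg hT
    hg.aestronglyMeasurable.stronglyMeasurable_mk.measurable (hg.congr hgg')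

end MaximalErgodic

theorem Function.Semiconj.iterate_sub_eq_birkhoffSum {X G : Type*} [AddCommGroup G]
    {F : G → G} {f : X → X} {p : G → X} (hp : Function.Semiconj p F f) {φ : X → G}
    (hφ : ∀ z, φ (p z) = F z - z) (n : ℕ) (z : G) :
    F^[n] z - z = birkhoffSum f φ n (p z) := by
  induction n with
  | zero => simp
  | succ n ih =>
    rw [birkhoffSum_succ, ← ih, ← (hp.iterate_right n).eq, hφ, Function.iterate_succ_apply']
    abel

theorem no_uniform_deviation_drift_general
    {d : ℕ} (F : E d ≃ₜ E d) (f : T d ≃ₜ T d) (hlift : IsLift F f)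
    (v : E d)
    (μ : Measure (T d)) (hprob : IsProbabilityMeasure μ) (herg : Ergodic (⇑f) μ)
    (φ : T d → E d) (hφcont : Continuous φ)
    (hφ : ∀ z : E d, φ (tpi d z) = F z - z) :
    ¬ ∃ s : ℝ, 0 < s ∧ ∀ᵐ z ∂μ, ∃ n : ℕ, 0 < n ∧ ∀ zt : E d, tpi d zt = z →
        s * n ≤ (inner ℝ ((⇑F)^[n] zt - zt - (n : ℝ) • (∫ w, φ w ∂μ)) v : ℝ) := by
  rintro ⟨s, hs, hdrift⟩
  have := hprob
  set ρ := ∫ w, φ w ∂μ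
  set g : T d → ℝ := fun w => inner ℝ (φ w - ρ) v - s / 2
  have hφ' : Continuous fun w => φ w - ρ := hφcont.sub continuous_const
  have hmean : ∫ w, inner ℝ (φ w - ρ) v ∂μ = 0 := by
    simp_rw [real_inner_comm v]
    rw [integral_inner (hφ'.integrable_of_hasCompactSupport (.of_compactSpace _)),
      integral_sub (hφcont.integrable_of_hasCompactSupport (.of_compactSpace _))
        (integrable_const ρ), integral_const, probReal_univ, one_smul, sub_self, inner_zero_right]
  have hsum (n : ℕ) (z : E d) : birkhoffSum f g n (tpi d z) =
      inner ℝ ((⇑F)^[n] z - z - (n : ℝ) • ρ) v - n * (s / 2) := by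
    rw [Function.Semiconj.iterate_sub_eq_birkhoffSum hlift.1 hφ]
    simp [g, birkhoffSum, Finset.sum_sub_distrib, sum_inner, inner_sub_left, real_inner_smul_left]
  have hpos : ∀ᵐ x ∂μ, ∃ n, 0 < birkhoffSum f g n x := by
    filter_upwards [hdrift] with x ⟨n, hn, hx⟩
    obtain ⟨z, rfl⟩ : ∃ z, tpi d z = x := QuotientAddGroup.mk_surjective x
    have hn' : (0 : ℝ) < n := Nat.cast_pos.mpr hn
    exact ⟨n, by nlinarith [hx z rfl, hsum n z]⟩
  have hinner : Integrable (fun w => inner ℝ (φ w - ρ) v) μ :=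
    (hφ'.inner continuous_const).integrable_of_hasCompactSupport (.of_compactSpace _)
  have hg : 0 ≤ ∫ w, g w ∂μ := integral_nonneg_of_ae_exists_birkhoffSum_pos
    herg.toMeasurePreserving (hinner.sub (integrable_const _)) hpos
  rw [integral_sub hinner (integrable_const _), hmean, integral_const, probReal_univ,
    one_smul] at hg
  linarith

/-- **Lemma (no uniform drift for ergodic measures).**
If `μ` is an ergodic `f`-invariant Borel probability measure with rotation vector
`ρ_μ = ∫ (F - id) dμ`, then there is no `s > 0` such that for `μ`-a.e. `z` some
iterate `n_z ≥ 1` satisfies `⟨F^{n_z}(z̃) - z̃ - n_z ρ_μ, v⟩ ≥ s n_z` (for every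
lift `z̃` of `z`). -/
theorem no_uniform_deviation_drift
    {d : ℕ} (F : E d ≃ₜ E d) (f : T d ≃ₜ T d) (hlift : IsLift F f)
    (v : E d) (hv : v ≠ 0)
    (μ : Measure (T d)) (hprob : IsProbabilityMeasure μ) (herg : Ergodic (⇑f) μ)
    (φ : T d → E d) (hφcont : Continuous φ)
    (hφ : ∀ z : E d, φ (tpi d z) = F z - z) :
    ¬ ∃ s : ℝ, 0 < s ∧ ∀ᵐ z ∂μ, ∃ n : ℕ, 0 < n ∧ ∀ zt : E d, tpi d zt = z →
        s * n ≤ (inner ℝ ((⇑F)^[n] zt - zt - (n : ℝ) • (∫ w, φ w ∂μ)) v : ℝ) :=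
  no_uniform_deviation_drift_general F f hlift v μ hprob herg φ hφcont hφ
end
end

section
/- Let F : ℝ² → ℝ² be a lift of a homeomorphism f of the two-torus homotopic to the identity, U ⊆ T², and M ∈ SL(2,ℤ) with induced torus automorphism g_M; set f̃ = g_M⁻¹∘f∘g_M with lift F̃ = M⁻¹∘F∘M. If ρ_U(F) ⊆ L_{λ,v} for some λ ∈ ℝ and v ∈ ℝ² \ {0}, then ρ_{g_M⁻¹(U)}(F̃) ⊆ M⁻¹(L_{λ,v}) = L_{λ̃,ṽ}, where ṽ = Mᵀv and λ̃ = λ‖v‖²/‖ṽ‖². Moreover, for all n ∈ ℕ and z, ρ ∈ ℝ²: ⟨F^n(z) − z − nρ, v⟩ = ⟨F̃^n(M⁻¹z) − M⁻¹z − n M⁻¹ρ, ṽ⟩. -/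
noncomputable section
open Filter Topology Metric Set MeasureTheory

/-- The linear action of an integer matrix on `ℝ²`. -/
def mulV (M : Matrix (Fin 2) (Fin 2) ℤ) (z : E 2) : E 2 :=
  (WithLp.equiv 2 (Fin 2 → ℝ)).symm
    ((M.map (Int.cast : ℤ → ℝ)).mulVec (WithLp.equiv 2 (Fin 2 → ℝ) z))

/-!
Conjugating by the linear map `M` turns `F̃ = M⁻¹ ∘ F ∘ M` into `F` (`M ∘ F̃ⁿ = Fⁿ ∘ M`), so `M`
carries displacement vectors of `F̃` to those of `F`, hence `M ρ_{g_M⁻¹(U)}(F̃) ⊆ ρ_U(F)`.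
Since `⟨M z, v⟩ = ⟨z, Mᵀ v⟩`, the preimage of `L_{λ,v}` under `M` is the line orthogonal to
`Mᵀ v` at the same level `λ‖v‖²`, and the deviations agree.
-/

open Function

lemma mulV_apply (M : Matrix (Fin 2) (Fin 2) ℤ) (z : E 2) (i : Fin 2) :
    mulV M z i = (M i 0 : ℝ) * z 0 + (M i 1 : ℝ) * z 1 := by
  fin_cases i <;> simp [mulV, Matrix.map_apply]

lemma mulV_mulV (M N : Matrix (Fin 2) (Fin 2) ℤ) (z : E 2) :
    mulV M (mulV N z) = mulV (M * N) z := by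
  ext i; fin_cases i <;> simp [mulV_apply, Matrix.mul_apply, Fin.sum_univ_two] <;> ring

lemma mulV_one (z : E 2) : mulV 1 z = z := by
  ext i; fin_cases i <;> simp [mulV_apply]

lemma mulV_zero (M : Matrix (Fin 2) (Fin 2) ℤ) : mulV M 0 = 0 := by
  ext i; simp [mulV_apply]

lemma mulV_mulV_of_mul_eq_one {M N : Matrix (Fin 2) (Fin 2) ℤ} (h : M * N = 1) (z : E 2) :
    mulV M (mulV N z) = z := by
  rw [mulV_mulV, h, mulV_one]

def mulVLinear (M : Matrix (Fin 2) (Fin 2) ℤ) : E 2 →ₗ[ℝ] E 2 where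
  toFun := mulV M
  map_add' x y := by ext i; simp [mulV_apply]; ring
  map_smul' c x := by ext i; simp [mulV_apply]; ring

@[simp]
lemma mulVLinear_apply (M : Matrix (Fin 2) (Fin 2) ℤ) (z : E 2) : mulVLinear M z = mulV M z :=
  rfl

lemma mulV_sub (M : Matrix (Fin 2) (Fin 2) ℤ) (x y : E 2) :
    mulV M (x - y) = mulV M x - mulV M y :=
  map_sub (mulVLinear M) x y

lemma mulV_smul (M : Matrix (Fin 2) (Fin 2) ℤ) (c : ℝ) (x : E 2) :
    mulV M (c • x) = c • mulV M x :=
  map_smul (mulVLinear M) c x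

lemma sdot_mulV (M : Matrix (Fin 2) (Fin 2) ℤ) (v z : E 2) :
    sdot v (mulV M z) = sdot (mulV M.transpose v) z := by
  simp [sdot, mulV_apply, Matrix.transpose_apply]; ring

lemma sdot_self (v : E 2) : sdot v v = ‖v‖ ^ 2 := by
  rw [EuclideanSpace.norm_eq, Real.sq_sqrt (by positivity)]
  simp [sdot, Fin.sum_univ_two]; ring

lemma preimage_mulV_lineL (M : Matrix (Fin 2) (Fin 2) ℤ) (lam : ℝ) {v : E 2}
    (hv : mulV M.transpose v ≠ 0) :
    mulV M ⁻¹' lineL lam v =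
      lineL (lam * ‖v‖ ^ 2 / ‖mulV M.transpose v‖ ^ 2) (mulV M.transpose v) := by
  have hnorm : ‖mulV M.transpose v‖ ^ 2 ≠ 0 := by positivity
  ext z
  simp only [Set.mem_preimage, lineL, Set.mem_ofPred_eq, sdot_mulV, sdot_self]
  rw [div_mul_cancel₀ _ hnorm]

lemma mulV_transpose_ne_zero {M N : Matrix (Fin 2) (Fin 2) ℤ} (hMN : M * N = 1) {v : E 2}
    (hv : v ≠ 0) : mulV M.transpose v ≠ 0 := by
  intro h
  apply hv
  rw [← mulV_mulV_of_mul_eq_one (M := N.transpose) (N := M.transpose)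
    (by rw [← Matrix.transpose_mul, hMN, Matrix.transpose_one]) v, h, mulV_zero]

lemma semiconj_mulV_conj {M N : Matrix (Fin 2) (Fin 2) ℤ} (hMN : M * N = 1) (F : E 2 → E 2) :
    Semiconj (mulV M) (mulV N ∘ F ∘ mulV M) F :=
  fun _ => mulV_mulV_of_mul_eq_one hMN _

lemma rotRel_mapsTo {d : ℕ} {F G : E d → E d} {W W' : Set (E d)} (A : E d →ₗ[ℝ] E d)
    (hA : Semiconj A G F) (hW : Set.MapsTo A W W') :
    Set.MapsTo A (rotRel G W) (rotRel F W') := by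
  rintro ρ ⟨n, z, hn, hz, hconv⟩
  refine ⟨n, fun i => A (z i), hn, fun i => hW (hz i), ?_⟩
  have hdisp : ∀ i, (n i : ℝ)⁻¹ • (F^[n i] (A (z i)) - A (z i)) =
      A ((n i : ℝ)⁻¹ • (G^[n i] (z i) - z i)) := fun i => by
    rw [map_smul, map_sub, (hA.iterate_right (n i)) (z i)]
  simp only [hdisp]
  exact (A.continuous_of_finiteDimensional.tendsto ρ).comp hconv

theorem reduction_lemma_line_general
    (F : E 2 ≃ₜ E 2) (U : Set (T 2))
    (M N : Matrix (Fin 2) (Fin 2) ℤ)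
    (hMN : M * N = 1) (hNM : N * M = 1)
    (gM : T 2 ≃ₜ T 2) (hgM : ∀ z : E 2, gM (tpi 2 z) = tpi 2 (mulV M z))
    (lam : ℝ) (v : E 2) (hv : v ≠ 0)
    (hline : rotU (⇑F) U ⊆ lineL lam v) :
    rotU (mulV N ∘ ⇑F ∘ mulV M) (⇑gM ⁻¹' U) ⊆ mulV N '' lineL lam v ∧
    mulV N '' lineL lam v = lineL (lam * ‖v‖ ^ 2 / ‖mulV M.transpose v‖ ^ 2) (mulV M.transpose v) ∧
    ∀ (n : ℕ) (z ρ : E 2),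
      sdot v ((⇑F)^[n] z - z - (n : ℝ) • ρ) =
        sdot (mulV M.transpose v)
          ((mulV N ∘ ⇑F ∘ mulV M)^[n] (mulV N z) - mulV N z - (n : ℝ) • mulV N ρ) := by
  have hconj := semiconj_mulV_conj hMN F
  have hN_image : mulV N '' lineL lam v = mulV M ⁻¹' lineL lam v :=
    congrFun (Set.image_eq_preimage_of_inverse (mulV_mulV_of_mul_eq_one hMN)
      (mulV_mulV_of_mul_eq_one hNM)) _
  refine ⟨?_, ?_, fun n z ρ => ?_⟩
  · intro ρ hρ
    rw [hN_image]
    refine hline (rotRel_mapsTo (mulVLinear M) hconj (fun z hz => ?_) hρ)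
    simpa only [Set.mem_preimage, mulVLinear_apply, hgM] using hz
  · rw [hN_image, preimage_mulV_lineL M lam (mulV_transpose_ne_zero hMN hv)]
  · rw [← sdot_mulV, mulV_sub, mulV_sub, mulV_smul, hconj.iterate_right n,
      mulV_mulV_of_mul_eq_one hMN, mulV_mulV_of_mul_eq_one hMN]

/-- **Reduction Lemma, part (b).**
If `ρ_U(F) ⊆ L_{λ,v}` then `ρ_{g_M⁻¹(U)}(F̃) ⊆ M⁻¹(L_{λ,v}) = L_{λ̃,ṽ}` with
`ṽ = M.transposev` and `λ̃ = λ‖v‖²/‖ṽ‖²`; moreover the deviations satisfy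
`D^v_{f,n}(z,ρ) = D^{ṽ}_{f̃,n}(M⁻¹z, M⁻¹ρ)`. -/
theorem reduction_lemma_line
    (F : E 2 ≃ₜ E 2) (f : T 2 ≃ₜ T 2) (hlift : IsLift F f)
    (U : Set (T 2))
    (M N : Matrix (Fin 2) (Fin 2) ℤ) (hdet : M.det = 1)
    (hMN : M * N = 1) (hNM : N * M = 1)
    (gM : T 2 ≃ₜ T 2) (hgM : ∀ z : E 2, gM (tpi 2 z) = tpi 2 (mulV M z))
    (lam : ℝ) (v : E 2) (hv : v ≠ 0)
    (hline : rotU (⇑F) U ⊆ lineL lam v) :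
    rotU (mulV N ∘ ⇑F ∘ mulV M) (⇑gM ⁻¹' U) ⊆ mulV N '' lineL lam v ∧
    mulV N '' lineL lam v = lineL (lam * ‖v‖ ^ 2 / ‖mulV M.transpose v‖ ^ 2) (mulV M.transpose v) ∧
    ∀ (n : ℕ) (z ρ : E 2),
      sdot v ((⇑F)^[n] z - z - (n : ℝ) • ρ) =
        sdot (mulV M.transpose v)
          ((mulV N ∘ ⇑F ∘ mulV M)^[n] (mulV N z) - mulV N z - (n : ℝ) • mulV N ρ) :=
  reduction_lemma_line_general F U M N hMN hNM gM hgM lam v hv hline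
end
end

section
/- Let F : ℝ² → ℝ² be a lift of a homeomorphism f of the two-torus homotopic to the identity and let U ⊆ T² be open, connected, bounded and recurrent. Assume ρ_U(F) = S is a line segment contained in ℝ·v for some v ∈ ℝ² \ {0} with 0 ∉ S, and let v' ∈ ℝ² be linearly independent of v. Let Û be a connected component of π⁻¹(U). Then there exist p ∈ ℕ and w ∈ ℤ², with w linearly independent of v', such that (F^p(Û) − w) ∩ Û ≠ ∅. In particular, if v is not a scalar multiple of an integer vector, then there exist infinitely many pairs (pᵢ, wᵢ) ∈ ℕ × ℤ² with pairwise linearly independent integer vectors wᵢ satisfying (F^{pᵢ}(Û) − wᵢ) ∩ Û ≠ ∅. -/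
noncomputable section
open Filter Topology Metric Set MeasureTheory

section Aux

lemma tpi_eq_iff {x y : E 2} : tpi 2 x = tpi 2 y ↔ y - x ∈ ZLat 2 := by
  rw [tpi, QuotientAddGroup.eq]; constructor <;> intro h <;>
    · have := h; rwa [neg_add_eq_sub] at *

lemma continuous_tpi : Continuous (tpi 2) := continuous_quotient_mk'
lemma isOpenMap_tpi : IsOpenMap (tpi 2) := QuotientAddGroup.isOpenMap_coe
lemma isOpen_of_preimage {s : Set (T 2)} (h : IsOpen (tpi 2 ⁻¹' s)) : IsOpen s :=
  QuotientAddGroup.isOpenQuotientMap_mk.isQuotientMap.isOpen_preimage.mp h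
lemma tpi_add_mem {x m : E 2} (hm : m ∈ ZLat 2) : tpi 2 (x + m) = tpi 2 x := by
  rw [tpi_eq_iff]; simpa using (ZLat 2).neg_mem hm

lemma my_preimage_translate (U : Set (T 2)) {k : E 2} (hk : k ∈ ZLat 2) :
    (fun y => y + k) '' (tpi 2 ⁻¹' U) = tpi 2 ⁻¹' U := by
  ext y
  constructor
  · rintro ⟨z, hz, rfl⟩
    simpa [Set.mem_preimage, tpi_add_mem hk] using hz
  · intro hy
    refine ⟨y - k, ?_, by simp⟩
    have h : tpi 2 y = tpi 2 (y - k) := by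
      rw [tpi_eq_iff]
      simpa using (ZLat 2).neg_mem hk
    rw [Set.mem_preimage, ← h]
    exact hy

lemma my_comp_translate (U : Set (T 2)) {k z : E 2} (hk : k ∈ ZLat 2) (hz : z ∈ tpi 2 ⁻¹' U) :
    (fun y => y + k) '' connectedComponentIn (tpi 2 ⁻¹' U) z
      = connectedComponentIn (tpi 2 ⁻¹' U) (z + k) := by
  have := (Homeomorph.addRight k).image_connectedComponentIn (s := tpi 2 ⁻¹' U) (x := z) hz
  simpa [my_preimage_translate U hk] using this

lemma proj_component_eq {U : Set (T 2)} (hUopen : IsOpen U) (hUconn : IsConnected U)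
    {x : E 2} (hx : x ∈ tpi 2 ⁻¹' U) :
    tpi 2 '' connectedComponentIn (tpi 2 ⁻¹' U) x = U := by
  set s : Set (E 2) := tpi 2 ⁻¹' U with hs
  have hsopen : IsOpen s := hUopen.preimage continuous_tpi
  set C := connectedComponentIn s x with hC
  have hCopen : IsOpen C := hsopen.connectedComponentIn
  set A := tpi 2 '' C with hA
  have hAopen : IsOpen A := isOpenMap_tpi C hCopen
  have hAU : A ⊆ U := by
    rintro _ ⟨z, hzC, rfl⟩
    exact connectedComponentIn_subset s x hzC
  have hBopen : IsOpen (U \ A) := by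
    apply isOpen_of_preimage
    have hpre : tpi 2 ⁻¹' (U \ A) = s \ tpi 2 ⁻¹' A := rfl
    rw [hpre, isOpen_iff_forall_mem_open]
    intro y hy
    refine ⟨connectedComponentIn s y, ?_, hsopen.connectedComponentIn,
      mem_connectedComponentIn hy.1⟩
    intro y' hy'
    refine ⟨connectedComponentIn_subset s y hy', ?_⟩
    intro hy'A
    obtain ⟨z, hzC, hzt⟩ := hy'A
    have hkmem : y' - z ∈ ZLat 2 := tpi_eq_iff.mp hzt
    have hzs : z ∈ s := connectedComponentIn_subset s x hzC
    have h1 : C = connectedComponentIn s z := connectedComponentIn_eq hzC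
    have hyy' : connectedComponentIn s y = connectedComponentIn s y' :=
      connectedComponentIn_eq hy'
    have hz' : z + (y' - z) = y' := by abel
    have h3 := my_comp_translate U hkmem hzs
    rw [hz'] at h3
    replace h3 := h3.symm
    have hyim : y ∈ (fun w => w + (y' - z)) '' connectedComponentIn s z := by
      rw [← h3, ← hyy']
      exact mem_connectedComponentIn hy.1
    obtain ⟨c, hcC, hcy⟩ := hyim
    apply hy.2
    have hcC' : c ∈ C := by rw [h1]; exact hcC
    exact ⟨c, hcC', by rw [← hcy, tpi_add_mem hkmem]⟩
  have hUsub : U ⊆ A ∪ (U \ A) := fun u hu => by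
    by_cases h : u ∈ A
    · exact Or.inl h
    · exact Or.inr ⟨hu, h⟩
  have hdisj : Disjoint A (U \ A) := disjoint_sdiff_self_right
  have hAne : (U ∩ A).Nonempty :=
    ⟨tpi 2 x, hAU ⟨x, mem_connectedComponentIn hx, rfl⟩,
      ⟨x, mem_connectedComponentIn hx, rfl⟩⟩
  have := hUconn.isPreconnected.subset_left_of_subset_union hAopen hBopen hdisj hUsub hAne
  exact le_antisymm hAU this

lemma floor_decomp (z : E 2) : ∃ m ∈ ZLat 2, ∀ i, z i - m i ∈ Icc (0:ℝ) 1 := by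
  refine ⟨(WithLp.equiv 2 (Fin 2 → ℝ)).symm (fun i => (⌊z i⌋ : ℝ)),
    fun i => ⟨⌊z i⌋, rfl⟩, fun i => ?_⟩
  have h1 := Int.fract_nonneg (z i)
  have h2 := (Int.fract_lt_one (z i)).le
  rw [Int.fract] at h1 h2
  exact ⟨h1, h2⟩

lemma norm_le_of_unit (z : E 2) (h : ∀ i, z i ∈ Icc (0:ℝ) 1) : ‖z‖ ≤ 2 := by
  rw [EuclideanSpace.norm_eq]
  have hsum : (∑ i, ‖z i‖ ^ 2) ≤ 4 := by
    have hh : ∀ i : Fin 2, ‖z i‖ ^ 2 ≤ 1 := fun i => by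
      have := h i
      rw [Real.norm_eq_abs, sq_abs]
      nlinarith [this.1, this.2]
    calc (∑ i, ‖z i‖ ^ 2) ≤ ∑ _i : Fin 2, (1:ℝ) := Finset.sum_le_sum fun i _ => hh i
    _ = 2 := by simp
    _ ≤ 4 := by norm_num
  calc Real.sqrt (∑ i, ‖z i‖ ^ 2) ≤ Real.sqrt 4 := Real.sqrt_le_sqrt hsum
  _ = 2 := by rw [show (4:ℝ) = 2^2 by norm_num, Real.sqrt_sq (by norm_num : (0:ℝ) ≤ 2)]

lemma disp_bound (F : E 2 ≃ₜ E 2) (f : T 2 ≃ₜ T 2) (hlift : IsLift F f) :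
    ∃ C : ℝ, 0 ≤ C ∧ ∀ z : E 2, ‖F z - z‖ ≤ C := by
  set K : Set (E 2) := {z | ∀ i, z i ∈ Icc (0:ℝ) 1} with hK
  have hKc : IsClosed K := by
    have : K = ⋂ i, (fun z : E 2 => z i) ⁻¹' Icc (0:ℝ) 1 := by
      ext z; simp [hK, Set.mem_iInter]
    rw [this]
    exact isClosed_iInter fun i =>
      isClosed_Icc.preimage (EuclideanSpace.proj (𝕜 := ℝ) i).continuous
  have hKb : Bornology.IsBounded K :=
    (Metric.isBounded_iff_subset_closedBall 0).mpr
      ⟨2, fun z hz => by simpa [Metric.mem_closedBall] using norm_le_of_unit z hz⟩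
  have hKcompact : IsCompact K := Metric.isCompact_of_isClosed_isBounded hKc hKb
  have hKne : K.Nonempty := ⟨0, fun i => by simp⟩
  have hg : Continuous fun z : E 2 => ‖F z - z‖ := (F.continuous.sub continuous_id).norm
  obtain ⟨z₀, _, hz₀⟩ := hKcompact.exists_isMaxOn hKne hg.continuousOn
  refine ⟨‖F z₀ - z₀‖, norm_nonneg _, fun z => ?_⟩
  have hz₀' : ∀ w ∈ K, ‖F w - w‖ ≤ ‖F z₀ - z₀‖ := fun w hw => hz₀ hw
  obtain ⟨m, hm, hzm⟩ := floor_decomp z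
  have hd : F z - z = F (z - m) - (z - m) := by
    have h := hlift.2 (z - m) m hm
    rw [show (z - m) + m = z by abel] at h
    rw [h]; abel
  rw [hd]
  exact hz₀' (z - m) (fun i => by simpa [PiLp.sub_apply] using hzm i)

lemma iter_translate {F : E 2 ≃ₜ E 2} {f : T 2 ≃ₜ T 2} (hlift : IsLift F f)
    (n : ℕ) (z m : E 2) (hm : m ∈ ZLat 2) : (⇑F)^[n] (z + m) = (⇑F)^[n] z + m := by
  induction n generalizing z with
  | zero => simp
  | succ n ih =>
    rw [Function.iterate_succ_apply, Function.iterate_succ_apply, hlift.2 z m hm, ih]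

lemma iter_tpi {F : E 2 ≃ₜ E 2} {f : T 2 ≃ₜ T 2} (hlift : IsLift F f)
    (n : ℕ) (z : E 2) : tpi 2 ((⇑F)^[n] z) = (⇑f)^[n] (tpi 2 z) := by
  induction n generalizing z with
  | zero => simp
  | succ n ih =>
    rw [Function.iterate_succ_apply, Function.iterate_succ_apply, ih, hlift.1 z]

lemma iter_bound {F : E 2 ≃ₜ E 2} {C : ℝ} (hC : ∀ z : E 2, ‖F z - z‖ ≤ C)
    (n : ℕ) (z : E 2) : ‖(⇑F)^[n] z - z‖ ≤ n * C := by
  induction n with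
  | zero => simp
  | succ n ih =>
    have h : (⇑F)^[n+1] z - z = (F ((⇑F)^[n] z) - (⇑F)^[n] z) + ((⇑F)^[n] z - z) := by
      rw [Function.iterate_succ_apply']; abel
    rw [h]
    calc ‖_ + _‖ ≤ ‖F ((⇑F)^[n] z) - (⇑F)^[n] z‖ + ‖(⇑F)^[n] z - z‖ := norm_add_le _ _
    _ ≤ C + n * C := add_le_add (hC _) ih
    _ = (n+1 : ℕ) * C := by push_cast; ring

lemma key_step {F : E 2 ≃ₜ E 2} {f : T 2 ≃ₜ T 2} (hlift : IsLift F f)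
    {U : Set (T 2)} (hUopen : IsOpen U) (hUconn : IsConnected U)
    {w₀ : E 2} (hw₀ : w₀ ∈ tpi 2 ⁻¹' U)
    (n : ℕ) (hrec : ((⇑f)^[n] '' U ∩ U).Nonempty) :
    ∃ m ∈ ZLat 2, ∃ x ∈ connectedComponentIn (tpi 2 ⁻¹' U) w₀,
      (⇑F)^[n] x - m ∈ connectedComponentIn (tpi 2 ⁻¹' U) w₀ := by
  obtain ⟨u', ⟨u, hu, hfu⟩, hu'⟩ := hrec
  set s : Set (E 2) := tpi 2 ⁻¹' U with hs
  set Uh := connectedComponentIn s w₀ with hUh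
  have hproj := proj_component_eq hUopen hUconn hw₀
  have hmem : u ∈ tpi 2 '' Uh := by rw [hUh, hproj]; exact hu
  obtain ⟨x, hxU, hxu⟩ := hmem
  have hxs : x ∈ s := connectedComponentIn_subset s w₀ hxU
  have hy : (⇑F)^[n] x ∈ s := by
    show tpi 2 ((⇑F)^[n] x) ∈ U
    rw [iter_tpi hlift, hxu, hfu]
    exact hu'
  have hproj2 := proj_component_eq hUopen hUconn hy
  have hmem2 : u ∈ tpi 2 '' connectedComponentIn s ((⇑F)^[n] x) := by rw [hproj2]; exact hu
  obtain ⟨y', hy'C, hy'u⟩ := hmem2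
  have hk : y' - x ∈ ZLat 2 := tpi_eq_iff.mp (hxu.trans hy'u.symm)
  have hcompx : connectedComponentIn s x = Uh := (connectedComponentIn_eq hxU).symm
  have h1 : connectedComponentIn s ((⇑F)^[n] x) = connectedComponentIn s y' :=
    connectedComponentIn_eq hy'C
  have h2 : connectedComponentIn s y' = (fun w => w + (y' - x)) '' Uh := by
    have h := my_comp_translate U hk hxs
    rw [hcompx, show x + (y' - x) = y' by abel] at h
    exact h.symm
  have hymem : (⇑F)^[n] x ∈ (fun w => w + (y' - x)) '' Uh := by
    rw [← h2, ← h1]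
    exact mem_connectedComponentIn hy
  obtain ⟨c, hc, hceq⟩ := hymem
  refine ⟨y' - x, hk, x, hxU, ?_⟩
  have hcc : (⇑F)^[n] x - (y' - x) = c :=
    sub_eq_iff_eq_add.mpr (hceq.symm : (⇑F)^[n] x = c + (y' - x))
  rw [hcc]
  exact hc

lemma li_of_span_ne {a b : E 2} (ha : a ≠ 0) (hb : b ≠ 0)
    (h : Submodule.span ℝ {a} ≠ Submodule.span ℝ {b}) : LinearIndependent ℝ ![a, b] := by
  rw [linearIndependent_fin2]
  refine ⟨hb, fun t ht => ?_⟩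
  simp only [Matrix.cons_val_one, Matrix.head_cons, Matrix.cons_val_zero] at ht
  have ht0 : t ≠ 0 := by rintro rfl; rw [zero_smul] at ht; exact ha ht.symm
  apply h
  rw [← ht, Submodule.span_singleton_smul_eq (IsUnit.mk0 t ht0)]

end Aux


lemma exists_infinite_fiber' {α : Type*} (f : ℕ → α) (h : ¬ (Set.range f).Infinite) :
    ∃ W, {j : ℕ | f j = W}.Infinite := by
  rw [Set.not_infinite] at h
  have : Finite (Set.range f) := h
  obtain ⟨b, hb⟩ := Finite.exists_infinite_fiber (Set.rangeFactorization f)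
  refine ⟨b, ?_⟩
  rw [← Set.infinite_coe_iff]
  convert hb using 2
  ext x
  simp [Set.rangeFactorization, Subtype.ext_iff]

lemma master (F : E 2 ≃ₜ E 2) (f : T 2 ≃ₜ T 2) (hlift : IsLift F f)
    (U : Set (T 2)) (hUopen : IsOpen U) (hUconn : IsConnected U)
    (hUbdd : BoundedSet U) (hUrec : Recurrent f U)
    {w₀ : E 2} (hw₀ : w₀ ∈ tpi 2 ⁻¹' U) :
    ∃ (n : ℕ → ℕ) (m : ℕ → E 2) (ρ : E 2),
      ρ ∈ rotU (⇑F) U ∧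
      Tendsto (fun k => (n k : ℝ)⁻¹ • m k) atTop (𝓝 ρ) ∧
      ∀ k, 1 ≤ n k ∧ m k ∈ ZLat 2 ∧
        ∃ x ∈ connectedComponentIn (tpi 2 ⁻¹' U) w₀,
          (⇑F)^[n k] x - m k ∈ connectedComponentIn (tpi 2 ⁻¹' U) w₀ := by
  set Uh := connectedComponentIn (tpi 2 ⁻¹' U) w₀ with hUh
  obtain ⟨R, hR⟩ := (isBounded_iff_forall_norm_le).mp (hUbdd w₀ hw₀)
  have hR0 : 0 ≤ R := le_trans (norm_nonneg w₀) (hR w₀ (mem_connectedComponentIn hw₀))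
  obtain ⟨C, hC0, hC⟩ := disp_bound F f hlift
  have hSinf : {n : ℕ | 1 ≤ n ∧ ((⇑f)^[n] '' U ∩ U).Nonempty}.Infinite := hUrec
  set e := Set.Infinite.natEmbedding _ hSinf with he
  set n₀ : ℕ → ℕ := fun k => (e k : ℕ) with hn₀
  have hn₀S : ∀ k, 1 ≤ n₀ k ∧ ((⇑f)^[n₀ k] '' U ∩ U).Nonempty := fun k => (e k).2
  have hn₀inj : Function.Injective n₀ := fun a b hab => e.injective (Subtype.ext hab)
  have hn₀top : Tendsto n₀ atTop atTop := by
    rw [← Nat.cofinite_eq_atTop]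
    exact hn₀inj.tendsto_cofinite
  have hkey : ∀ k, ∃ m ∈ ZLat 2, ∃ x ∈ Uh, (⇑F)^[n₀ k] x - m ∈ Uh := fun k =>
    key_step hlift hUopen hUconn hw₀ (n₀ k) (hn₀S k).2
  choose m hmZ x hxU hFx using hkey
  have hn₀pos : ∀ k, (0:ℝ) < n₀ k := fun k => by exact_mod_cast (hn₀S k).1
  set q : ℕ → E 2 := fun k => (n₀ k : ℝ)⁻¹ • m k with hq
  have hmb : ∀ k, ‖m k‖ ≤ n₀ k * C + 2 * R := by
    intro k
    have h1 : ‖(⇑F)^[n₀ k] (x k) - x k‖ ≤ n₀ k * C := iter_bound hC _ _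
    have h2 : ‖(⇑F)^[n₀ k] (x k) - m k‖ ≤ R := hR _ (hFx k)
    have h3 : ‖x k‖ ≤ R := hR _ (hxU k)
    have hdec : m k = ((⇑F)^[n₀ k] (x k) - x k) - ((⇑F)^[n₀ k] (x k) - m k) + x k := by abel
    rw [hdec]
    calc ‖((⇑F)^[n₀ k] (x k) - x k) - ((⇑F)^[n₀ k] (x k) - m k) + x k‖
        ≤ ‖((⇑F)^[n₀ k] (x k) - x k) - ((⇑F)^[n₀ k] (x k) - m k)‖ + ‖x k‖ := norm_add_le _ _
      _ ≤ ‖(⇑F)^[n₀ k] (x k) - x k‖ + ‖(⇑F)^[n₀ k] (x k) - m k‖ + ‖x k‖ := by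
          have := norm_sub_le ((⇑F)^[n₀ k] (x k) - x k) ((⇑F)^[n₀ k] (x k) - m k)
          linarith
      _ ≤ n₀ k * C + 2 * R := by linarith
  have hqb : ∀ k, ‖q k‖ ≤ C + 2 * R := by
    intro k
    have hnpos := hn₀pos k
    have h1 : (1:ℝ) ≤ n₀ k := by exact_mod_cast (hn₀S k).1
    have h2 : ‖m k‖ ≤ (C + 2*R) * n₀ k := by nlinarith [hmb k]
    have h3 : (n₀ k:ℝ)⁻¹ * ‖m k‖ ≤ (n₀ k:ℝ)⁻¹ * ((C + 2*R) * n₀ k) :=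
      mul_le_mul_of_nonneg_left h2 (by positivity)
    have h4 : (n₀ k:ℝ)⁻¹ * ((C + 2*R) * n₀ k) = C + 2*R := by
      field_simp
    calc ‖q k‖ = (n₀ k:ℝ)⁻¹ * ‖m k‖ := by
          rw [hq, norm_smul, Real.norm_eq_abs, abs_inv, abs_of_pos hnpos]
      _ ≤ C + 2*R := by rw [← h4]; exact h3
  obtain ⟨ρ, -, φ, hφmono, hφlim⟩ := tendsto_subseq_of_bounded
    (Metric.isBounded_closedBall (x := (0:E 2)) (r := C + 2*R))
    (fun k => by rw [mem_closedBall_zero_iff]; exact hqb k)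
  have hnφtop : Tendsto (fun i => n₀ (φ i)) atTop atTop := hn₀top.comp hφmono.tendsto_atTop
  have herr : Tendsto
      (fun i => (n₀ (φ i) : ℝ)⁻¹ • ((⇑F)^[n₀ (φ i)] (x (φ i)) - x (φ i) - m (φ i)))
      atTop (𝓝 0) := by
    apply squeeze_zero_norm (a := fun i => (n₀ (φ i):ℝ)⁻¹ * (2 * R))
    · intro i
      rw [norm_smul, Real.norm_eq_abs, abs_inv, abs_of_pos (hn₀pos _)]
      apply mul_le_mul_of_nonneg_left _ (by positivity)
      have h2 : ‖(⇑F)^[n₀ (φ i)] (x (φ i)) - m (φ i)‖ ≤ R := hR _ (hFx (φ i))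
      have h3 : ‖x (φ i)‖ ≤ R := hR _ (hxU (φ i))
      calc ‖(⇑F)^[n₀ (φ i)] (x (φ i)) - x (φ i) - m (φ i)‖
          = ‖((⇑F)^[n₀ (φ i)] (x (φ i)) - m (φ i)) - x (φ i)‖ := by congr 1; abel
        _ ≤ ‖(⇑F)^[n₀ (φ i)] (x (φ i)) - m (φ i)‖ + ‖x (φ i)‖ := norm_sub_le _ _
        _ ≤ 2 * R := by linarith
    · have h0 : Tendsto (fun i => ((n₀ (φ i):ℝ))⁻¹) atTop (𝓝 0) :=
        tendsto_inv_atTop_zero.comp (tendsto_natCast_atTop_atTop.comp hnφtop)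
      simpa using h0.mul_const (2*R)
  have hrot : Tendsto (fun i => (n₀ (φ i):ℝ)⁻¹ • ((⇑F)^[n₀ (φ i)] (x (φ i)) - x (φ i)))
      atTop (𝓝 ρ) := by
    have hsum := hφlim.add herr
    rw [add_zero] at hsum
    have heq : (fun i => (n₀ (φ i):ℝ)⁻¹ • ((⇑F)^[n₀ (φ i)] (x (φ i)) - x (φ i)))
        = fun i => (q ∘ φ) i
            + (n₀ (φ i):ℝ)⁻¹ • ((⇑F)^[n₀ (φ i)] (x (φ i)) - x (φ i) - m (φ i)) := by
      funext i
      simp only [Function.comp, hq]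
      rw [← smul_add]
      congr 1
      abel
    rw [heq]
    exact hsum
  have hρU : ρ ∈ rotU (⇑F) U :=
    ⟨fun i => n₀ (φ i), fun i => x (φ i), hnφtop,
      fun i => connectedComponentIn_subset _ _ (hxU (φ i)), hrot⟩
  exact ⟨fun i => n₀ (φ i), fun i => m (φ i), ρ, hρU, hφlim,
    fun k => ⟨(hn₀S (φ k)).1, hmZ _, x (φ k), hxU _, hFx _⟩⟩

/-- **Lemma (recurrence with translation vectors transverse to `v'`).**
If `U` is open, connected, bounded and recurrent, `ρ_U(F) = S ⊆ ℝ·v` is a line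
segment with `0 ∉ S`, and `v'` is linearly independent of `v`, then for any
connected component `Û` of `π⁻¹(U)` there are `p ≥ 1` and an integer vector `w`
independent of `v'` with `(F^p(Û) - w) ∩ Û ≠ ∅`; if moreover `v` is not a scalar
multiple of an integer vector, there are infinitely many such pairs with pairwise
independent integer vectors. -/
theorem recurrence_translation_pairs
    (F : E 2 ≃ₜ E 2) (f : T 2 ≃ₜ T 2) (hlift : IsLift F f)
    (U : Set (T 2)) (hUopen : IsOpen U) (hUconn : IsConnected U)
    (hUbdd : BoundedSet U) (hUrec : Recurrent f U)
    (v : E 2) (hv : v ≠ 0) (v' : E 2) (hvv' : LinearIndependent ℝ ![v, v'])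
    (p₀ q₀ : E 2) (hpq : p₀ ≠ q₀) (hSseg : rotU (⇑F) U = segment ℝ p₀ q₀)
    (hSline : rotU (⇑F) U ⊆ (Submodule.span ℝ {v} : Submodule ℝ (E 2)))
    (hS0 : (0 : E 2) ∉ rotU (⇑F) U)
    (Uhat : Set (E 2))
    (hUhat : ∃ w ∈ tpi 2 ⁻¹' U, Uhat = connectedComponentIn (tpi 2 ⁻¹' U) w) :
    (∃ (p : ℕ) (w : E 2), 1 ≤ p ∧ w ∈ ZLat 2 ∧ LinearIndependent ℝ ![w, v'] ∧
      ((fun z => (⇑F)^[p] z - w) '' Uhat ∩ Uhat).Nonempty) ∧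
    ((¬ ∃ (c : ℝ) (w : E 2), w ∈ ZLat 2 ∧ v = c • w) →
      ∃ (p : ℕ → ℕ) (w : ℕ → E 2),
        (∀ i, 1 ≤ p i ∧ w i ∈ ZLat 2 ∧
          ((fun z => (⇑F)^[p i] z - w i) '' Uhat ∩ Uhat).Nonempty) ∧
        ∀ i j, i ≠ j → LinearIndependent ℝ ![w i, w j]) := by
  obtain ⟨w₀, hw₀, hUhat'⟩ := hUhat
  subst hUhat'
  obtain ⟨n, m, ρ, hρU, htq, hprop⟩ := master F f hlift U hUopen hUconn hUbdd hUrec hw₀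
  obtain ⟨c, hcv⟩ := Submodule.mem_span_singleton.mp (hSline hρU)
  have hc0 : c ≠ 0 := by
    rintro rfl
    rw [zero_smul] at hcv
    exact hS0 (hcv ▸ hρU)
  have hv'0 : v' ≠ 0 := by
    have h := hvv'.ne_zero 1
    simpa using h
  have hρnot : ρ ∉ (Submodule.span ℝ {v'} : Submodule ℝ (E 2)) := by
    intro hmem
    obtain ⟨a, ha⟩ := Submodule.mem_span_singleton.mp hmem
    have h2 := (linearIndependent_fin2.mp hvv').2 (c⁻¹ * a)
    apply h2
    simp only [Matrix.cons_val_one, Matrix.head_cons, Matrix.cons_val_zero]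
    rw [mul_smul, ha, ← hcv, smul_smul, inv_mul_cancel₀ hc0, one_smul]
  have hcl : IsClosed ((Submodule.span ℝ {v'} : Submodule ℝ (E 2)) : Set (E 2)) :=
    Submodule.closed_of_finiteDimensional _
  have hevn : ∀ᶠ y in 𝓝 ρ, y ∈ ((Submodule.span ℝ {v'} : Submodule ℝ (E 2)) : Set (E 2))ᶜ :=
    hcl.isOpen_compl.eventually_mem hρnot
  obtain ⟨K, hK⟩ := Filter.eventually_atTop.mp (htq.eventually hevn)
  have hmnot : ∀ k, K ≤ k → m k ∉ (Submodule.span ℝ {v'} : Submodule ℝ (E 2)) := by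
    intro k hk hmem
    exact hK k hk (Submodule.smul_mem _ _ hmem)
  have hmne : ∀ k, K ≤ k → m k ≠ 0 := by
    intro k hk h0
    exact hmnot k hk (h0 ▸ Submodule.zero_mem _)
  have hnonempty : ∀ k, ((fun z => (⇑F)^[n k] z - m k) ''
      connectedComponentIn (tpi 2 ⁻¹' U) w₀ ∩
      connectedComponentIn (tpi 2 ⁻¹' U) w₀).Nonempty := by
    intro k
    obtain ⟨x, hx, hFx⟩ := (hprop k).2.2
    exact ⟨(⇑F)^[n k] x - m k, ⟨x, hx, rfl⟩, hFx⟩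
  constructor
  · refine ⟨n K, m K, (hprop K).1, (hprop K).2.1, ?_, hnonempty K⟩
    rw [linearIndependent_fin2]
    refine ⟨hv'0, fun t ht => ?_⟩
    simp only [Matrix.cons_val_one, Matrix.head_cons, Matrix.cons_val_zero] at ht
    exact hmnot K le_rfl (Submodule.mem_span_singleton.mpr ⟨t, ht⟩)
  · intro hirr
    set M : ℕ → Submodule ℝ (E 2) := fun j => Submodule.span ℝ {m (j + K)} with hM
    have hMinf : (Set.range M).Infinite := by
      by_contra hfin
      obtain ⟨W, hW⟩ := exists_infinite_fiber' M hfin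
      obtain ⟨j₀, hj₀⟩ := hW.nonempty
      have hfreq : ∃ᶠ j in atTop, M j = W := Nat.frequently_atTop_iff_infinite.mpr hW
      have hfreq2 : ∃ᶠ j in atTop, (n (j+K):ℝ)⁻¹ • m (j+K) ∈ (W : Set (E 2)) :=
        hfreq.mono (fun j hj => by
          rw [← hj]
          exact Submodule.smul_mem _ _ (Submodule.mem_span_singleton_self _))
      have htail : Tendsto (fun j => (n (j+K):ℝ)⁻¹ • m (j+K)) atTop (𝓝 ρ) :=
        htq.comp (tendsto_add_atTop_nat K)
      have hρW : ρ ∈ (W : Set (E 2)) := by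
        have hclW : IsClosed (W : Set (E 2)) := Submodule.closed_of_finiteDimensional _
        have hmemcl := mem_closure_of_frequently_of_tendsto hfreq2 htail
        rwa [hclW.closure_eq] at hmemcl
      have hρW' : ρ ∈ Submodule.span ℝ {m (j₀ + K)} := by
        rw [hM] at hj₀
        rw [← hj₀] at hρW
        exact hρW
      obtain ⟨a, ha⟩ := Submodule.mem_span_singleton.mp hρW'
      apply hirr
      refine ⟨c⁻¹ * a, m (j₀ + K), (hprop (j₀+K)).2.1, ?_⟩
      rw [mul_smul, ha, ← hcv, smul_smul, inv_mul_cancel₀ hc0, one_smul]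
    set e := Set.Infinite.natEmbedding _ hMinf with he
    have hex : ∀ i, ∃ j, M j = (e i : Submodule ℝ (E 2)) := fun i => (e i).2
    choose g hg using hex
    refine ⟨fun i => n (g i + K), fun i => m (g i + K),
      fun i => ⟨(hprop _).1, (hprop _).2.1, hnonempty _⟩, ?_⟩
    intro i j hij
    have hgij : Submodule.span ℝ {m (g i + K)} ≠ Submodule.span ℝ {m (g j + K)} := by
      show M (g i) ≠ M (g j)
      rw [hg i, hg j]
      intro h
      exact hij (e.injective (Subtype.ext h))
    exact li_of_span_ne (hmne _ (Nat.le_add_left K (g i))) (hmne _ (Nat.le_add_left K (g j))) hgij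
end
end
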